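/- arXiv:0711.2844 — 8 statements merged into one kernel-verified Lean document; each statement's English description precedes it below -/
import Mathlib

section
/- For the cycle C_n on n ≥ 3 vertices, the dynamic chromatic number is χ_d(C_n) = 3 if n is a multiple of 3, χ_d(C_5) = 5, and χ_d(C_n) = 4 for all other n. -/
/-!
A coloring of `C_n` (`n ≥ 3`) is dynamic exactly when vertices at cyclic distance `1` or `2`
get different colors, so three consecutive vertices always see three colors. With only three
colors this forces the coloring to be `3`-periodic, which is impossible unless `3 ∣ n`; and in
`C_5` any two vertices are at distance `1` or `2`, so all five colors must differ. Conversely,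
`v ↦ v mod 3` works when `3 ∣ n`, and otherwise `n = 3a + 4b` with `b ∈ {1, 2}` (this needs
`n ≠ 5`), so the cycle splits into blocks colored `0,1,2` followed by blocks colored `0,1,2,3`.
-/

open SimpleGraph

/-- A dynamic `k`-coloring of `G`: a proper vertex coloring such that every vertex
with at least two neighbors sees at least two distinct colors among its neighbors. -/
def IsDynamicColoring {V : Type*} (G : SimpleGraph V) (k : ℕ) (c : V → Fin k) : Prop :=
  (∀ ⦃u v : V⦄, G.Adj u v → c u ≠ c v) ∧
  ∀ v : V, 2 ≤ (G.neighborSet v).ncard →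
    ∃ u w : V, G.Adj v u ∧ G.Adj v w ∧ c u ≠ c w

/-- The dynamic chromatic number: the least `k` admitting a dynamic `k`-coloring. -/
noncomputable def dynamicChromaticNumber {V : Type*} (G : SimpleGraph V) : ℕ :=
  sInf {k : ℕ | ∃ c : V → Fin k, IsDynamicColoring G k c}

open scoped Fin.CommRing

theorem dynamicChromaticNumber_eq_of {V : Type*} {G : SimpleGraph V} {k : ℕ}
    (hk : ∃ c : V → Fin k, IsDynamicColoring G k c)
    (hmin : ∀ j (c : V → Fin j), IsDynamicColoring G j c → k ≤ j) :
    dynamicChromaticNumber G = k :=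
  le_antisymm (Nat.sInf_le hk) (le_csInf ⟨k, hk⟩ fun j ⟨c, hc⟩ => hmin j c hc)

theorem cycleGraph_adj_iff {n : ℕ} {u v : Fin (n + 2)} :
    (cycleGraph (n + 2)).Adj u v ↔ v = u + 1 ∨ u = v + 1 := by
  rw [cycleGraph_adj, sub_eq_iff_eq_add', sub_eq_iff_eq_add', or_comm]

theorem eq_of_ne_of_card_le_three {α : Type*} [Fintype α] [DecidableEq α] (hα : Fintype.card α ≤ 3)
    {x y a b : α} (hab : a ≠ b) (hxa : x ≠ a) (hxb : x ≠ b) (hya : y ≠ a) (hyb : y ≠ b) :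
    x = y := by
  by_contra hxy
  have hcard : ({x, y, a, b} : Finset α).card = 4 := by
    simp [Finset.card_insert_of_notMem, *]
  have := Finset.card_le_univ ({x, y, a, b} : Finset α)
  omega

section CycleSquareColoring

variable {m : ℕ} {α : Type*}

def IsCycleSquareColoring (c : Fin (m + 3) → α) : Prop :=
  ∀ v, c v ≠ c (v + 1) ∧ c v ≠ c (v + 2)

theorem isDynamicColoring_cycleGraph_iff {k : ℕ} {c : Fin (m + 3) → Fin k} :
    IsDynamicColoring (cycleGraph (m + 3)) k c ↔ IsCycleSquareColoring c := by
  constructor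
  · rintro ⟨hproper, hdyn⟩ v
    refine ⟨hproper (cycleGraph_adj_iff.2 (.inl rfl)), fun hc => ?_⟩
    have hdeg : 2 ≤ ((cycleGraph (m + 3)).neighborSet (v + 1)).ncard := by
      rw [Set.ncard_eq_toFinset_card', ← neighborFinset_def, card_neighborFinset_eq_degree,
        cycleGraph_degree_three_le]
    obtain ⟨u, w, hu, hw, hne⟩ := hdyn (v + 1) hdeg
    have hnbr : ∀ x, (cycleGraph (m + 3)).Adj (v + 1) x → c x = c v := by
      intro x hx
      rcases cycleGraph_adj_iff.1 hx with rfl | h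
      · rw [add_assoc, one_add_one_eq_two, hc]
      · rw [add_right_cancel h]
    exact hne ((hnbr u hu).trans (hnbr w hw).symm)
  · intro hc
    refine ⟨fun u v huv => ?_, fun v _ => ?_⟩
    · rcases cycleGraph_adj_iff.1 huv with rfl | rfl
      exacts [(hc u).1, ((hc v).1).symm]
    · refine ⟨v - 1, v + 1, cycleGraph_adj_iff.2 (.inr (by ring)), cycleGraph_adj_iff.2 (.inl rfl),
        ?_⟩
      simpa only [show v - 1 + 2 = v + 1 by ring] using (hc (v - 1)).2

theorem isCycleSquareColoring_id : IsCycleSquareColoring (id : Fin (m + 3) → Fin (m + 3)) := by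
  intro v
  simp only [id, ne_eq, left_eq_add]
  exact ⟨by simp, by simp [Fin.ext_iff, Nat.mod_eq_of_lt (by omega : 2 < m + 3)]⟩

namespace IsCycleSquareColoring

variable {c : Fin (m + 3) → α}

theorem three_le_card [Fintype α] (hc : IsCycleSquareColoring c) : 3 ≤ Fintype.card α := by
  refine Fintype.two_lt_card_iff.2 ⟨c 0, c 1, c 2, ?_, ?_, ?_⟩
  · simpa using (hc 0).1
  · simpa using (hc 0).2
  · simpa [one_add_one_eq_two] using (hc 1).1

theorem periodic [Fintype α] (hc : IsCycleSquareColoring c) (hα : Fintype.card α ≤ 3) :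
    Function.Periodic c 3 := by
  classical
  intro v
  have h12 : c (v + 1) ≠ c (v + 2) := by convert (hc (v + 1)).1 using 2; ring
  have h13 : c (v + 1) ≠ c (v + 3) := by convert (hc (v + 1)).2 using 2; ring
  have h23 : c (v + 2) ≠ c (v + 3) := by convert (hc (v + 2)).1 using 2; ring
  exact (eq_of_ne_of_card_le_three hα h12 (hc v).1 (hc v).2 h13.symm h23.symm).symm

theorem three_dvd [Fintype α] (hc : IsCycleSquareColoring c) (hα : Fintype.card α ≤ 3) :
    3 ∣ m + 3 := by
  by_contra h3
  -- `3` is invertible mod `m + 3`, so some multiple of the period `3` is `1`.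
  obtain ⟨j, -, hj⟩ := Nat.exists_mul_mod_eq_one_of_coprime
    (Nat.prime_three.coprime_iff_not_dvd.2 h3) (by omega : 1 < m + 3)
  have hinv : (j : Fin (m + 3)) * 3 = 1 := by
    simpa using (Fin.ext (by rw [Fin.val_natCast, mul_comm, hj, Fin.val_one]) :
      ((j * 3 : ℕ) : Fin (m + 3)) = 1)
  have hc1 := (hc.periodic hα).nat_mul_eq j
  rw [hinv] at hc1
  exact (hc 0).1 (by rw [zero_add, hc1])

theorem four_le_card [Fintype α] (hc : IsCycleSquareColoring c) (h3 : ¬ 3 ∣ m + 3) :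
    4 ≤ Fintype.card α := by
  by_contra hα
  exact h3 (hc.three_dvd (by omega))

theorem injective_of_five {c : Fin 5 → α} (hc : IsCycleSquareColoring c) :
    Function.Injective c := by
  have hdist : ∀ v w : Fin 5, v ≠ w → w = v + 1 ∨ w = v + 2 ∨ v = w + 1 ∨ v = w + 2 := by
    decide
  intro v w hvw
  by_contra hne
  rcases hdist v w hne with rfl | rfl | rfl | rfl
  exacts [(hc v).1 hvw, (hc v).2 hvw, (hc w).1 hvw.symm, (hc w).2 hvw.symm]

end IsCycleSquareColoring

theorem isCycleSquareColoring_mod_three (h3 : 3 ∣ m + 3) :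
    IsCycleSquareColoring fun v : Fin (m + 3) => (⟨v % 3, by omega⟩ : Fin 3) := by
  intro v
  simp only [ne_eq, Fin.mk.injEq, Fin.val_add, Fin.val_one, Fin.val_two, Nat.mod_mod_of_dvd _ h3]
  constructor <;> omega

theorem exists_isCycleSquareColoring_fin_four (h3 : ¬ 3 ∣ m + 3) (h5 : m + 3 ≠ 5) :
    ∃ c : Fin (m + 3) → Fin 4, IsCycleSquareColoring c := by
  -- vertices below `t` (a multiple of `3`) get `0,1,2,…`, the last `4 * (n % 3)` get `0,1,2,3,…`
  set t := m + 3 - 4 * ((m + 3) % 3) with ht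
  refine ⟨fun v => ⟨if v.val < t then v % 3 else (v - t) % 4, by split <;> omega⟩, fun v => ?_⟩
  have h1 := Fin.val_add_eq_ite v 1
  have h2 := Fin.val_add_eq_ite v 2
  rw [Fin.val_one] at h1
  rw [Fin.val_two] at h2
  simp only [ne_eq, Fin.mk.injEq]
  generalize (v + 1).val = a at *
  generalize (v + 2).val = b at *
  have := v.isLt
  constructor <;> split_ifs at * <;> omega

end CycleSquareColoring

theorem dynamicChromaticNumber_cycleGraph_eq {m k : ℕ}
    (hk : ∃ c : Fin (m + 3) → Fin k, IsCycleSquareColoring c)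
    (hmin : ∀ j (c : Fin (m + 3) → Fin j), IsCycleSquareColoring c → k ≤ j) :
    dynamicChromaticNumber (cycleGraph (m + 3)) = k :=
  dynamicChromaticNumber_eq_of (hk.imp fun _ => isDynamicColoring_cycleGraph_iff.2)
    fun j c hc => hmin j c (isDynamicColoring_cycleGraph_iff.1 hc)

/-- For the cycle `C_n` on `n ≥ 3` vertices: `χ_d(C_n) = 3` if `3 ∣ n`,
`χ_d(C_5) = 5`, and `χ_d(C_n) = 4` otherwise. -/
theorem dynamic_chromatic_cycleGraph (n : ℕ) (hn : 3 ≤ n) :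
    (3 ∣ n → dynamicChromaticNumber (cycleGraph n) = 3) ∧
    (n = 5 → dynamicChromaticNumber (cycleGraph n) = 5) ∧
    (¬ 3 ∣ n → n ≠ 5 → dynamicChromaticNumber (cycleGraph n) = 4) := by
  obtain ⟨m, rfl⟩ : ∃ m, n = m + 3 := ⟨n - 3, by omega⟩
  refine ⟨fun h3 => ?_, fun h5 => ?_, fun h3 h5 => ?_⟩
  · refine dynamicChromaticNumber_cycleGraph_eq ⟨_, isCycleSquareColoring_mod_three h3⟩
      fun j c hc => ?_
    simpa using hc.three_le_card
  · obtain rfl : m = 2 := by omega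
    refine dynamicChromaticNumber_cycleGraph_eq ⟨id, isCycleSquareColoring_id⟩ fun j c hc => ?_
    simpa using Fintype.card_le_of_injective c hc.injective_of_five
  · refine dynamicChromaticNumber_cycleGraph_eq (exists_isCycleSquareColoring_fin_four h3 h5)
      fun j c hc => ?_
    simpa using hc.four_le_card h3
end

section
/- If every vertex of degree at least 2 in a graph G is contained in a triangle of G, then every proper k-coloring of G is a dynamic k-coloring; consequently χ_d(G) = χ(G). -/
open SimpleGraph

/- In a triangle `v a b`, the neighbors `a` and `b` of `v` are adjacent, so any proper coloring
already gives them distinct colors; hence the dynamic condition is automatic, dynamic colorings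
are exactly proper colorings, and the two chromatic numbers coincide. -/

section Triangles

variable {V : Type*} {G : SimpleGraph V}
  (htri : ∀ v : V, 2 ≤ (G.neighborSet v).ncard → ∃ a b : V, G.Adj v a ∧ G.Adj v b ∧ G.Adj a b)
include htri

theorem isDynamicColoring_of_proper {k : ℕ} {c : V → Fin k}
    (hc : ∀ ⦃u w : V⦄, G.Adj u w → c u ≠ c w) : IsDynamicColoring G k c := by
  refine ⟨hc, fun v hv => ?_⟩
  obtain ⟨a, b, hva, hvb, hab⟩ := htri v hv
  exact ⟨a, b, hva, hvb, hc hab⟩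

theorem exists_isDynamicColoring_iff_colorable (k : ℕ) :
    (∃ c : V → Fin k, IsDynamicColoring G k c) ↔ G.Colorable k := by
  constructor
  · rintro ⟨c, hc, -⟩
    exact ⟨⟨c, fun hadj => hc hadj⟩⟩
  · rintro ⟨C⟩
    exact ⟨C, isDynamicColoring_of_proper htri fun _ _ hadj => C.valid hadj⟩

theorem dynamicChromaticNumber_eq_chromaticNumber {n : ℕ} (hcol : G.Colorable n) :
    (dynamicChromaticNumber G : ℕ∞) = G.chromaticNumber := by
  rw [hcol.chromaticNumber_eq_sInf, dynamicChromaticNumber]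
  simp only [exists_isDynamicColoring_iff_colorable htri]

end Triangles

/-- If every vertex of degree at least 2 in `G` lies in a triangle, then every proper
`k`-coloring of `G` is a dynamic `k`-coloring; consequently `χ_d(G) = χ(G)`. -/
theorem dynamic_chromatic_eq_chromatic_of_triangles {V : Type*} [Fintype V]
    (G : SimpleGraph V)
    (h : ∀ v : V, 2 ≤ (G.neighborSet v).ncard →
      ∃ a b : V, G.Adj v a ∧ G.Adj v b ∧ G.Adj a b) :
    (∀ (k : ℕ) (c : V → Fin k), (∀ ⦃u w : V⦄, G.Adj u w → c u ≠ c w) →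
      IsDynamicColoring G k c) ∧
    (dynamicChromaticNumber G : ℕ∞) = G.chromaticNumber := by
  exact ⟨fun _ _ hc => isDynamicColoring_of_proper h hc,
      dynamicChromaticNumber_eq_chromaticNumber h G.colorable_of_fintype⟩
end

section
/- If G is a connected graph with maximum degree at most 3 that is not isomorphic to K_4 and in which every vertex is contained in a triangle, then χ_d(G) ≤ 3. -/
/-!
A proper 3-colouring is automatically dynamic here: every vertex lies in a triangle, so it has two
adjacent, hence differently coloured, neighbours. It therefore suffices to 3-colour `G`, which is
Brooks' theorem for maximum degree 3.

If some vertex `r` has degree at most 2, colour greedily in order of decreasing distance from `r`.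
Otherwise `G` is cubic. If `G` contains a diamond (`K₄` minus an edge), colour everything outside
it greedily, give its two non-adjacent tips a common colour avoiding their (at most one each)
outside neighbours, and its two spine vertices the two other colours. Otherwise pick a triangle
`T`: each outside vertex sees at most one vertex of `T` (else there is a diamond or a `K₄`), so
the three outside neighbours of `T` are distinct. Colour `G - T` greedily; if these three
neighbours received a common colour `t`, swap `t` and another colour along the Kempe chain of one
of them. In that Kempe graph every vertex has degree at most 2 and the three neighbours have
degree at most 1 (their triangle mates are coloured differently); a connected graph of maximum
degree 2 has at most two vertices of degree at most 1, by counting edges, so the chain misses one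
of the other two neighbours. Finally `T` receives three distinct colours avoiding those of its
outside neighbours.
-/

open SimpleGraph

namespace SimpleGraph

variable {V α : Type*} {G : SimpleGraph V}

def IsProperOn (G : SimpleGraph V) (S : Set V) (c : V → α) : Prop :=
  ∀ ⦃u v⦄, u ∈ S → v ∈ S → G.Adj u v → c u ≠ c v

theorem IsProperOn.colorable {k : ℕ} {c : V → Fin k} (hc : G.IsProperOn Set.univ c) :
    G.Colorable k :=
  ⟨Coloring.mk c fun huv => hc trivial trivial huv⟩

theorem IsProperOn.update_insert [DecidableEq V] {k : ℕ} {S : Finset V} {c : V → Fin k}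
    (hc : G.IsProperOn S c) {t : V} (ht : t ∉ S) (hlt : (G.neighborSet t ∩ S).ncard < k) :
    ∃ i, G.IsProperOn ↑(insert t S) (Function.update c t i) := by
  obtain ⟨i, -, hi⟩ := Set.exists_mem_notMem_of_ncard_lt_ncard
    (s := c '' (G.neighborSet t ∩ S)) (t := Set.univ)
    (by simpa using (Set.ncard_image_le (Set.toFinite _)).trans_lt hlt)
  refine ⟨i, ?_⟩
  have key : ∀ ⦃v⦄, v ∈ S → G.Adj t v → i ≠ c v := fun v hv htv h =>
    hi ⟨v, ⟨htv, hv⟩, h.symm⟩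
  simp only [Finset.coe_insert]
  rintro u v (rfl | hu) (rfl | hv) huv
  · exact absurd huv (G.loopless.irrefl _)
  · simpa [Function.update, ne_of_mem_of_not_mem hv ht] using key hv huv
  · simpa [Function.update, ne_of_mem_of_not_mem hu ht] using (key hu huv.symm).symm
  · simpa [Function.update, ne_of_mem_of_not_mem hu ht, ne_of_mem_of_not_mem hv ht]
      using hc hu hv huv

theorem exists_isProperOn_of_degenerate {k : ℕ} (S : Finset V)
    (h : ∀ T ⊆ S, T.Nonempty → ∃ t ∈ T, (G.neighborSet t ∩ T).ncard ≤ k) :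
    ∃ c : V → Fin (k + 1), G.IsProperOn S c := by
  classical
  induction S using Finset.strongInduction with
  | H S ih =>
  rcases S.eq_empty_or_nonempty with rfl | hne
  · exact ⟨0, by simp [IsProperOn]⟩
  obtain ⟨t, ht, hdeg⟩ := h S subset_rfl hne
  obtain ⟨c, hc⟩ := ih (S.erase t) (Finset.erase_ssubset ht)
    fun T hT => h T (hT.trans (Finset.erase_subset t S))
  have hsub : G.neighborSet t ∩ ↑(S.erase t) ⊆ G.neighborSet t ∩ S :=
    Set.inter_subset_inter_right _ (by simp)
  obtain ⟨i, hi⟩ := hc.update_insert (by simp)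
    (Nat.lt_succ_of_le ((Set.ncard_le_ncard hsub (Set.toFinite _)).trans hdeg))
  exact ⟨_, by simpa [Finset.insert_erase ht] using hi⟩

theorem Connected.exists_adj_dist_lt (hconn : G.Connected) {r v : V} (hne : v ≠ r) :
    ∃ w, G.Adj v w ∧ G.dist r w < G.dist r v := by
  obtain ⟨p, hp⟩ := (hconn v r).exists_walk_length_eq_dist
  obtain ⟨w, hadj, q, rfl⟩ := Walk.exists_eq_cons_of_ne hne p
  refine ⟨w, hadj, ?_⟩
  rw [G.dist_comm (u := r) (v := v), ← hp, Walk.length_cons, G.dist_comm]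
  exact Nat.lt_succ_of_le (dist_le q)

theorem Connected.exists_isProperOn [Finite V] {k : ℕ} (hconn : G.Connected)
    (hdeg : ∀ v, (G.neighborSet v).ncard ≤ k + 1) (S : Finset V) {r : V}
    (hr : r ∈ S → (G.neighborSet r).ncard ≤ k) :
    ∃ c : V → Fin (k + 1), G.IsProperOn S c := by
  refine exists_isProperOn_of_degenerate S fun T hTS hT => ?_
  obtain ⟨t, ht, hmin⟩ := T.exists_min_image (G.dist r) hT
  refine ⟨t, ht, ?_⟩
  by_cases htr : t = r
  · subst htr
    exact (Set.ncard_le_ncard Set.inter_subset_left).trans (hr (hTS ht))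
  obtain ⟨w, htw, hw⟩ := hconn.exists_adj_dist_lt htr
  have hwT : w ∉ T := fun hw' => (hmin w hw').not_gt hw
  calc (G.neighborSet t ∩ T).ncard ≤ (G.neighborSet t \ {w}).ncard :=
        Set.ncard_le_ncard fun v hv => ⟨hv.1, by rintro rfl; exact hwT hv.2⟩
    _ ≤ k := by
        rw [Set.ncard_sdiff_singleton_of_mem (show w ∈ G.neighborSet t from htw)]
        have := hdeg t
        omega

theorem IsProperOn.piecewise [DecidableEq V] {C : Finset V} {c d : V → α}
    (hc : G.IsProperOn (↑C)ᶜ c) (hd : G.IsProperOn C d)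
    (hcd : ∀ ⦃u v⦄, u ∈ C → v ∉ C → G.Adj u v → d u ≠ c v) :
    G.IsProperOn Set.univ (C.piecewise d c) := by
  intro u v _ _ huv
  by_cases hu : u ∈ C <;> by_cases hv : v ∈ C <;>
    simp only [Finset.piecewise_eq_of_mem, Finset.piecewise_eq_of_notMem, hu, hv,
      not_false_eq_true]
  · exact hd hu hv huv
  · exact hcd hu hv huv
  · exact (hcd hv hu huv.symm).symm
  · exact hc hu hv huv

theorem ncard_neighborSet_sdiff_pair [Finite V] {v p q : V} (hp : G.Adj v p) (hq : G.Adj v q)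
    (hpq : p ≠ q) : (G.neighborSet v \ {p, q}).ncard = (G.neighborSet v).ncard - 2 := by
  rw [Set.ncard_sdiff (by simp [Set.insert_subset_iff, hp, hq]), Set.ncard_pair hpq]

theorem subsingleton_neighborSet_sdiff_pair [Finite V] {v p q : V}
    (hdeg : (G.neighborSet v).ncard ≤ 3) (hp : G.Adj v p) (hq : G.Adj v q) (hpq : p ≠ q) :
    (G.neighborSet v \ {p, q}).Subsingleton := by
  rw [← Set.ncard_le_one_iff_subsingleton, ncard_neighborSet_sdiff_pair hp hq hpq]
  omega

theorem neighborSet_eq_triple [Finite V] {v p q r : V} (hdeg : (G.neighborSet v).ncard ≤ 3)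
    (hp : G.Adj v p) (hq : G.Adj v q) (hr : G.Adj v r) (hpq : p ≠ q) (hpr : p ≠ r) (hqr : q ≠ r) :
    G.neighborSet v = {p, q, r} :=
  (Set.eq_of_subset_of_ncard_le (by simp [Set.insert_subset_iff, hp, hq, hr])
    (hdeg.trans (Set.ncard_eq_three.mpr ⟨p, q, r, hpq, hpr, hqr, rfl⟩).ge)).symm

theorem IsNClique.ncard_neighborSet_sdiff [Finite V] {s : Finset V} {n : ℕ}
    (hs : G.IsNClique n s) {u : V} (hu : u ∈ s) :
    (G.neighborSet u \ s).ncard = (G.neighborSet u).ncard - (n - 1) := by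
  classical
  have hinter : G.neighborSet u ∩ s = ↑(s.erase u) := by
    ext w
    simp only [Set.mem_inter_iff, mem_neighborSet, Finset.coe_erase, Set.mem_sdiff,
      Finset.mem_coe, Set.mem_singleton_iff]
    exact ⟨fun h => ⟨h.2, h.1.ne'⟩, fun h => ⟨hs.isClique hu h.1 (Ne.symm h.2), h.1⟩⟩
  have := Set.ncard_inter_add_ncard_sdiff_eq_ncard (G.neighborSet u) s
  rw [hinter, Set.ncard_coe_finset, Finset.card_erase_of_mem hu, hs.card_eq] at this
  omega

theorem _root_.Set.Subsingleton.exists_forall_apply_eq {β : Type*} [Nonempty β] {s : Set V}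
    (hs : s.Subsingleton) (f : V → β) : ∃ b, ∀ x ∈ s, f x = b := by
  rcases hs.eq_empty_or_singleton with rfl | ⟨x, rfl⟩
  · exact ⟨Classical.arbitrary β, by simp⟩
  · exact ⟨f x, by simp⟩

theorem Connected.nonempty_iso_completeGraph_of_isNClique [Fintype V] {k : ℕ} {s : Finset V}
    (hconn : G.Connected) (hdeg : ∀ v, (G.neighborSet v).ncard ≤ k)
    (hs : G.IsNClique (k + 1) s) : Nonempty (G ≃g completeGraph (Fin (k + 1))) := by
  classical
  have hclosed : ∀ v ∈ s, ∀ y, G.Adj v y → y ∈ s := by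
    intro v hv y hvy
    by_contra hy
    have hsub : (↑(insert y (s.erase v)) : Set V) ⊆ G.neighborSet v := by
      intro u hu
      simp only [Finset.coe_insert, Finset.coe_erase, Set.mem_insert_iff, Set.mem_sdiff,
        Set.mem_singleton_iff] at hu
      rcases hu with rfl | ⟨hu, huv⟩
      · exact hvy
      · exact hs.isClique hv hu (Ne.symm huv)
    have := (Set.ncard_le_ncard hsub).trans (hdeg v)
    rw [Set.ncard_coe_finset, Finset.card_insert_of_notMem (by simp [hy]),
      Finset.card_erase_of_mem hv, hs.card_eq] at this
    omega
  have huniv : s = Finset.univ := by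
    obtain ⟨x, hx⟩ := Finset.card_pos.mp (by rw [hs.card_eq]; omega)
    refine Finset.eq_univ_of_forall fun v => ?_
    by_contra hv
    obtain ⟨d, -, hd₁, hd₂⟩ := (hconn x v).some.exists_boundary_dart s hx hv
    exact hd₂ (hclosed _ hd₁ _ d.adj)
  have htop : G = ⊤ := isClique_univ.mp (by simpa [huniv] using hs.isClique)
  subst htop
  exact ⟨Iso.completeGraph (Fintype.equivFinOfCardEq (by simpa [huniv] using hs.card_eq))⟩

theorem IsNClique.exists_eq_insert_pair [DecidableEq V] {T : Finset V} (hT : G.IsNClique 3 T)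
    {u u' : V} (hu : u ∈ T) (hu' : u' ∈ T) (huu' : u ≠ u') :
    ∃ z, z ≠ u ∧ z ≠ u' ∧ T = {u, u', z} := by
  obtain ⟨z, hz⟩ : ((T.erase u).erase u').Nonempty := by
    rw [← Finset.card_pos, Finset.card_erase_of_mem (Finset.mem_erase.mpr ⟨huu'.symm, hu'⟩),
      Finset.card_erase_of_mem hu, hT.card_eq]
    decide
  simp only [Finset.mem_erase] at hz
  refine ⟨z, hz.2.1, hz.1, (Finset.eq_of_subset_of_card_le ?_ ?_).symm⟩
  · simp [Finset.insert_subset_iff, hu, hu', hz.2.2]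
  · rw [hT.card_eq,
      Finset.card_eq_three.mpr ⟨u, u', z, huu', Ne.symm hz.2.1, Ne.symm hz.1, rfl⟩]

structure IsDiamond (G : SimpleGraph V) (a u w b : V) : Prop where
  adj_au : G.Adj a u
  adj_aw : G.Adj a w
  adj_uw : G.Adj u w
  adj_ub : G.Adj u b
  adj_wb : G.Adj w b
  ne : a ≠ b
  not_adj : ¬ G.Adj a b

theorem _root_.Fin.exists_diamond_colors (τ₁ τ₂ : Fin 3) :
    ∃ x y z : Fin 3, x ≠ y ∧ x ≠ z ∧ y ≠ z ∧ x ≠ τ₁ ∧ x ≠ τ₂ := by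
  revert τ₁ τ₂; decide

theorem IsDiamond.colorable_three [Fintype V] {a u w b : V} (hconn : G.Connected)
    (hdeg : ∀ v, (G.neighborSet v).ncard ≤ 3) (h : G.IsDiamond a u w b) : G.Colorable 3 := by
  classical
  obtain ⟨hau, haw, huw, hub, hwb, hab, hnab⟩ := h
  set C : Finset V := {a, u, w, b}
  obtain ⟨c, hc⟩ := hconn.exists_isProperOn (k := 2) hdeg Cᶜ (r := u) (by simp [C])
  obtain ⟨τa, hτa⟩ :=
    (subsingleton_neighborSet_sdiff_pair (hdeg a) hau haw huw.ne).exists_forall_apply_eq c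
  obtain ⟨τb, hτb⟩ :=
    (subsingleton_neighborSet_sdiff_pair (hdeg b) hub.symm hwb.symm huw.ne).exists_forall_apply_eq c
  obtain ⟨x, y, z, hxy, hxz, hyz, hxa, hxb⟩ := Fin.exists_diamond_colors τa τb
  set d : V → Fin 3 := fun v => if v = u then y else if v = w then z else x
  have hdu : d u = y := if_pos rfl
  have hdw : d w = z := by simp [d, huw.ne']
  have hda : d a = x := by simp [d, hau.ne, haw.ne]
  have hdb : d b = x := by simp [d, hub.ne', hwb.ne']
  rw [Finset.coe_compl] at hc
  refine (hc.piecewise (d := d) ?_ ?_).colorable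
  · intro v v' hv hv' hadj
    simp only [C, Finset.coe_insert, Finset.coe_singleton, Set.mem_insert_iff,
      Set.mem_singleton_iff] at hv hv'
    rcases hv with h | h | h | h <;> rcases hv' with h' | h' | h' | h' <;> subst v v' <;>
      simp only [hdu, hdw, hda, hdb] <;>
      first
        | exact absurd hadj (G.loopless.irrefl _) | exact absurd hadj hnab
        | exact absurd hadj.symm hnab | assumption | exact Ne.symm (by assumption)
  · have hNu := neighborSet_eq_triple (hdeg u) hau.symm huw hub haw.ne hab hwb.ne
    have hNw := neighborSet_eq_triple (hdeg w) haw.symm huw.symm hwb hau.ne hab hub.ne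
    intro v y hv hy hadj
    simp only [C, Finset.mem_insert, Finset.mem_singleton, not_or] at hv hy
    obtain ⟨hya, hyu, hyw, hyb⟩ := hy
    rcases hv with rfl | rfl | rfl | rfl
    · rw [hda, hτa y ⟨hadj, by simp [hyu, hyw]⟩]; exact hxa
    · have : y ∈ G.neighborSet v := hadj
      simp [hNu, hya, hyw, hyb] at this
    · have : y ∈ G.neighborSet v := hadj
      simp [hNw, hya, hyu, hyb] at this
    · rw [hdb, hτb y ⟨hadj, by simp [hyu, hyw]⟩]; exact hxb

theorem IsNClique.eq_of_adj_of_adj [Fintype V] {T : Finset V} (hconn : G.Connected)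
    (hdeg : ∀ v, (G.neighborSet v).ncard ≤ 3)
    (hK4 : ¬ Nonempty (G ≃g completeGraph (Fin 4))) (hdia : ∀ a u w b, ¬ G.IsDiamond a u w b)
    (hT : G.IsNClique 3 T) {y u u' : V} (hy : y ∉ T) (hu : u ∈ T) (hu' : u' ∈ T)
    (hyu : G.Adj y u) (hyu' : G.Adj y u') : u = u' := by
  classical
  by_contra huu'
  obtain ⟨z, hzu, hzu', rfl⟩ := hT.exists_eq_insert_pair hu hu' huu'
  have hclique := hT.isClique
  simp only [Finset.coe_insert, Finset.coe_singleton] at hclique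
  have huu'_adj : G.Adj u u' := hclique (by simp) (by simp) huu'
  have hzu_adj : G.Adj z u := hclique (by simp) (by simp) hzu
  have hzu'_adj : G.Adj z u' := hclique (by simp) (by simp) hzu'
  by_cases hyz : G.Adj y z
  · refine hK4 (hconn.nonempty_iso_completeGraph_of_isNClique hdeg
      (hT.insert (a := y) fun b hb => ?_))
    simp only [Finset.mem_insert, Finset.mem_singleton] at hb
    rcases hb with rfl | rfl | rfl <;> assumption
  · exact hdia z u u' y ⟨hzu_adj, hzu'_adj, huu'_adj, hyu.symm, hyu'.symm,
      fun h => hy (by simp [h]), fun h => hyz h.symm⟩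

open Finset in
theorem Connected.card_filter_degree_le_one_le_two [Fintype V] [DecidableRel G.Adj]
    (hconn : G.Connected) (hmax : ∀ v, G.degree v ≤ 2) : #{v | G.degree v ≤ 1} ≤ 2 := by
  have hedges := hconn.card_vert_le_card_edgeSet_add_one
  rw [Nat.card_eq_fintype_card, Nat.card_eq_fintype_card, ← edgeFinset_card] at hedges
  have hsum : ∑ v, G.degree v + #{v | G.degree v ≤ 1} ≤ 2 * Fintype.card V := by
    rw [card_filter, ← sum_add_distrib, mul_comm, ← smul_eq_mul, ← card_univ, ← sum_const]
    exact sum_le_sum fun v _ => by have := hmax v; split_ifs <;> omega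
  rw [sum_degrees_eq_twice_card_edges] at hsum
  omega

theorem Connected.ncard_setOf_ncard_neighborSet_le_one_le_two [Finite V] (hconn : G.Connected)
    (hmax : ∀ v, (G.neighborSet v).ncard ≤ 2) :
    {v | (G.neighborSet v).ncard ≤ 1}.ncard ≤ 2 := by
  classical
  have := Fintype.ofFinite V
  have hdeg (v : V) : (G.neighborSet v).ncard = G.degree v := by
    rw [Set.ncard_eq_toFinset_card', Set.toFinset_card, card_neighborSet_eq_degree]
  simp only [hdeg] at hmax ⊢
  rw [Set.ncard_eq_toFinset_card', Set.toFinset_ofPred]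
  exact hconn.card_filter_degree_le_one_le_two hmax

theorem not_reachable_and_reachable_of_ncard_neighborSet_le_one [Finite V]
    (hmax : ∀ v, (G.neighborSet v).ncard ≤ 2) {x₁ x₂ x₃ : V} (h₁₂ : x₁ ≠ x₂) (h₁₃ : x₁ ≠ x₃)
    (h₂₃ : x₂ ≠ x₃) (h₁ : (G.neighborSet x₁).ncard ≤ 1) (h₂ : (G.neighborSet x₂).ncard ≤ 1)
    (h₃ : (G.neighborSet x₃).ncard ≤ 1) : ¬ (G.Reachable x₁ x₂ ∧ G.Reachable x₁ x₃) := by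
  rintro ⟨hr₂, hr₃⟩
  set C := G.connectedComponentMk x₁
  have hdeg (v : C) : (C.toSimpleGraph.neighborSet v).ncard = (G.neighborSet v).ncard :=
    Set.ncard_preimage_of_injective_subset_range Subtype.val_injective
      fun w hw => ⟨⟨w, C.mem_supp_of_adj_mem_supp v.2 hw⟩, rfl⟩
  have hle := C.connected_toSimpleGraph.ncard_setOf_ncard_neighborSet_le_one_le_two
    fun v => (hdeg v).trans_le (hmax v)
  have hmem {x : V} (hx : G.Reachable x₁ x) : x ∈ C.supp := ConnectedComponent.eq.mpr hx.symm
  refine hle.not_gt ((Set.two_lt_ncard).mpr ⟨⟨x₁, hmem .rfl⟩, ?_, ⟨x₂, hmem hr₂⟩, ?_,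
    ⟨x₃, hmem hr₃⟩, ?_, ?_, ?_, ?_⟩) <;> simp_all

def kempeGraph (G : SimpleGraph V) (S : Set V) (c : V → α) (t a : α) : SimpleGraph V where
  Adj u w := G.Adj u w ∧ u ∈ S ∧ w ∈ S ∧ c u ∈ ({t, a} : Set α) ∧ c w ∈ ({t, a} : Set α)
  symm := ⟨fun _ _ h => ⟨h.1.symm, h.2.2.1, h.2.1, h.2.2.2.2, h.2.2.2.1⟩⟩
  loopless := ⟨fun v h => G.loopless.irrefl v h.1⟩

theorem _root_.Equiv.swap_apply_ne_of_not_and_mem [DecidableEq α] {t a x y : α} (hxy : x ≠ y)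
    (h : ¬ (x ∈ ({t, a} : Set α) ∧ y ∈ ({t, a} : Set α))) : Equiv.swap t a x ≠ y := by
  rw [Equiv.swap_apply_def]
  grind

section Kempe

variable [DecidableEq α] {S : Set V} {c : V → α}

open Classical in
noncomputable def kempeSwap (G : SimpleGraph V) (S : Set V) (c : V → α) (t a : α) (x : V) :
    V → α :=
  fun v => if (G.kempeGraph S c t a).Reachable x v then Equiv.swap t a (c v) else c v

theorem kempeSwap_of_reachable {t a : α} {x v : V} (h : (G.kempeGraph S c t a).Reachable x v) :
    G.kempeSwap S c t a x v = Equiv.swap t a (c v) := by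
  simp [kempeSwap, h]

theorem kempeSwap_of_not_reachable {t a : α} {x v : V}
    (h : ¬ (G.kempeGraph S c t a).Reachable x v) : G.kempeSwap S c t a x v = c v := by
  simp [kempeSwap, h]

theorem IsProperOn.kempeSwap (hc : G.IsProperOn S c) (t a : α) (x : V) :
    G.IsProperOn S (G.kempeSwap S c t a x) := by
  intro u v hu hv huv
  have hne := hc hu hv huv
  by_cases hxu : (G.kempeGraph S c t a).Reachable x u <;>
    by_cases hxv : (G.kempeGraph S c t a).Reachable x v <;>
    simp only [kempeSwap_of_reachable, kempeSwap_of_not_reachable, hxu, hxv,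
      not_false_eq_true]
  · exact (Equiv.swap t a).injective.ne hne
  · exact Equiv.swap_apply_ne_of_not_and_mem hne fun h =>
      hxv (hxu.trans (Adj.reachable ⟨huv, hu, hv, h⟩))
  · exact (Equiv.swap_apply_ne_of_not_and_mem hne.symm fun h =>
      hxu (hxv.trans (Adj.reachable ⟨huv.symm, hv, hu, h⟩))).symm
  · exact hne

theorem IsProperOn.neighborSet_kempeGraph_subset (hc : G.IsProperOn S c) (t a : α) (v : V) :
    (G.kempeGraph S c t a).neighborSet v ⊆
      {w | w ∈ S ∧ G.Adj v w ∧ c w = Equiv.swap t a (c v)} := by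
  rintro w ⟨hvw, hv, hw, hcv, hcw⟩
  refine ⟨hw, hvw, ?_⟩
  have := hc hv hw hvw
  simp only [Set.mem_insert_iff, Set.mem_singleton_iff] at hcv hcw
  rw [Equiv.swap_apply_def]
  grind

theorem IsProperOn.exists_not_all_eq [Finite V] {c : V → Fin 3} (hc : G.IsProperOn S c)
    {x₁ x₂ x₃ : V} (h₁₂ : x₁ ≠ x₂) (h₁₃ : x₁ ≠ x₃) (h₂₃ : x₂ ≠ x₃)
    (hmax : ∀ v e, {w | w ∈ S ∧ G.Adj v w ∧ c w = e}.ncard ≤ 2)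
    (hx : ∀ x ∈ ({x₁, x₂, x₃} : Set V), ∀ e, {w | w ∈ S ∧ G.Adj x w ∧ c w = e}.ncard ≤ 1) :
    ∃ c' : V → Fin 3, G.IsProperOn S c' ∧ ¬ (c' x₁ = c' x₂ ∧ c' x₂ = c' x₃) := by
  by_cases hmono : c x₁ = c x₂ ∧ c x₂ = c x₃
  swap; · exact ⟨c, hc, hmono⟩
  set t := c x₁
  have hta : ∀ t : Fin 3, t ≠ t + 1 := by decide
  have hsub (v : V) := Set.ncard_le_ncard (hc.neighborSet_kempeGraph_subset t (t + 1) v)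
  have hleaf := not_reachable_and_reachable_of_ncard_neighborSet_le_one
    (fun v => (hsub v).trans (hmax v _)) h₁₂ h₁₃ h₂₃ ((hsub _).trans (hx x₁ (by simp) _))
    ((hsub _).trans (hx x₂ (by simp) _)) ((hsub _).trans (hx x₃ (by simp) _))
  refine ⟨_, hc.kempeSwap t (t + 1) x₁, ?_⟩
  have hx₁ : G.kempeSwap S c t (t + 1) x₁ x₁ = t + 1 := by
    simp [kempeSwap_of_reachable (Reachable.refl x₁), t]
  rw [not_and_or] at hleaf
  rcases hleaf with h | h
  · simp [hx₁, kempeSwap_of_not_reachable h, ← hmono.1, (hta t).symm]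
  · simp only [hx₁, kempeSwap_of_not_reachable h, ← hmono.2, ← hmono.1]
    rintro ⟨h₁, h₂⟩
    exact hta t (h₂.symm.trans h₁.symm)

end Kempe

section TriangleMates

variable {γ : Type*} {S : Set V} {c : V → γ}

theorem IsProperOn.exists_triangle_mate_notMem_or_ne (hc : G.IsProperOn S c) {v α β : V}
    (hα : G.Adj v α) (hβ : G.Adj v β) (hαβ : G.Adj α β) (e : γ) :
    ∃ m, G.Adj v m ∧ (m = α ∨ m = β) ∧ (m ∉ S ∨ c m ≠ e) := by
  by_cases hα' : α ∈ S ∧ c α = e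
  · refine ⟨β, hβ, .inr rfl, not_and_or.mp fun hβ' => ?_⟩
    exact hc hα'.1 hβ'.1 hαβ (hα'.2.trans hβ'.2.symm)
  · exact ⟨α, hα, .inl rfl, not_and_or.mp hα'⟩

theorem IsProperOn.ncard_setOf_adj_color_le [Finite V] (hc : G.IsProperOn S c) {v α β : V}
    (hα : G.Adj v α) (hβ : G.Adj v β) (hαβ : G.Adj α β) (e : γ) :
    {w | w ∈ S ∧ G.Adj v w ∧ c w = e}.ncard ≤ (G.neighborSet v).ncard - 1 := by
  obtain ⟨m, hm, -, hme⟩ := hc.exists_triangle_mate_notMem_or_ne hα hβ hαβ e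
  rw [← Set.ncard_sdiff_singleton_of_mem (show m ∈ G.neighborSet v from hm)]
  refine Set.ncard_le_ncard fun w hw => ⟨hw.2.1, ?_⟩
  rintro rfl
  exact hme.elim (· hw.1) (· hw.2.2)

theorem IsProperOn.ncard_setOf_adj_color_le_of_adj_notMem [Finite V] (hc : G.IsProperOn S c)
    {v u α β : V} (hu : G.Adj v u) (huS : u ∉ S) (hα : G.Adj v α) (hβ : G.Adj v β)
    (hαβ : G.Adj α β) (hαS : α ∈ S) (hβS : β ∈ S) (e : γ) :
    {w | w ∈ S ∧ G.Adj v w ∧ c w = e}.ncard ≤ (G.neighborSet v).ncard - 2 := by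
  obtain ⟨m, hm, hmαβ, hme⟩ := hc.exists_triangle_mate_notMem_or_ne hα hβ hαβ e
  have hum : u ≠ m := by rintro rfl; rcases hmαβ with rfl | rfl <;> contradiction
  rw [← ncard_neighborSet_sdiff_pair hu hm hum]
  refine Set.ncard_le_ncard fun w hw => ⟨hw.2.1, ?_⟩
  rintro (rfl | rfl)
  exacts [huS hw.1, hme.elim (· hw.1) (· hw.2.2)]

end TriangleMates

theorem _root_.Fin.exists_triangle_colors (τ₁ τ₂ τ₃ : Fin 3) (h : ¬ (τ₁ = τ₂ ∧ τ₂ = τ₃)) :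
    ∃ d₁ d₂ d₃ : Fin 3, d₁ ≠ d₂ ∧ d₁ ≠ d₃ ∧ d₂ ≠ d₃ ∧ d₁ ≠ τ₁ ∧ d₂ ≠ τ₂ ∧ d₃ ≠ τ₃ := by
  revert τ₁ τ₂ τ₃; decide

theorem IsProperOn.colorable_three_of_triangle [DecidableEq V] {r p q : V} (hrp : G.Adj r p)
    (hrq : G.Adj r q) (hpq : G.Adj p q) {c : V → Fin 3}
    (hc : G.IsProperOn (↑({r, p, q} : Finset V))ᶜ c) {τr τp τq : Fin 3}
    (hτ : ¬ (τr = τp ∧ τp = τq)) (hr : ∀ y ∉ ({r, p, q} : Finset V), G.Adj r y → c y = τr)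
    (hp : ∀ y ∉ ({r, p, q} : Finset V), G.Adj p y → c y = τp)
    (hq : ∀ y ∉ ({r, p, q} : Finset V), G.Adj q y → c y = τq) : G.Colorable 3 := by
  obtain ⟨d₁, d₂, d₃, h₁₂, h₁₃, h₂₃, hd₁, hd₂, hd₃⟩ := Fin.exists_triangle_colors _ _ _ hτ
  set d : V → Fin 3 := fun v => if v = r then d₁ else if v = p then d₂ else d₃
  have hdr : d r = d₁ := if_pos rfl
  have hdp : d p = d₂ := by simp [d, hrp.ne']
  have hdq : d q = d₃ := by simp [d, hrq.ne', hpq.ne']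
  refine (hc.piecewise (d := d) ?_ ?_).colorable
  · intro v v' hv hv' hadj
    simp only [Finset.coe_insert, Finset.coe_singleton, Set.mem_insert_iff,
      Set.mem_singleton_iff] at hv hv'
    rcases hv with h | h | h <;> rcases hv' with h' | h' | h' <;> subst v v' <;>
      simp only [hdr, hdp, hdq] <;>
      first
        | exact absurd hadj (G.loopless.irrefl _) | assumption | exact Ne.symm (by assumption)
  · intro v y hv hy hadj
    simp only [Finset.mem_insert, Finset.mem_singleton] at hv
    rcases hv with h | h | h <;> subst v
    exacts [hdr ▸ hr y hy hadj ▸ hd₁, hdp ▸ hp y hy hadj ▸ hd₂, hdq ▸ hq y hy hadj ▸ hd₃]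

theorem notMem_of_triangle_at_outer_neighbor {T : Finset V}
    (hsep : ∀ y ∉ T, ∀ u ∈ T, ∀ u' ∈ T, G.Adj y u → G.Adj y u' → u = u')
    (huniq : ∀ u ∈ T, (G.neighborSet u \ T).Subsingleton) {u x α β : V} (hu : u ∈ T)
    (hx : x ∉ T) (hux : G.Adj u x) (hα : G.Adj x α) (hβ : G.Adj x β) (hαβ : G.Adj α β) :
    α ∉ T := by
  intro hαT
  obtain rfl := hsep x hx α hαT u hu hα hux.symm
  by_cases hβT : β ∈ T
  · exact hαβ.ne (hsep x hx α hu β hβT hα hβ)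
  · exact hβ.ne (huniq α hu ⟨hαβ, hβT⟩ ⟨hux, hx⟩).symm

theorem IsNClique.colorable_three_of_cubic [Fintype V] {T : Finset V} (hconn : G.Connected)
    (hcubic : ∀ v, (G.neighborSet v).ncard = 3)
    (htri : ∀ v : V, ∃ a b : V, G.Adj v a ∧ G.Adj v b ∧ G.Adj a b) (hT : G.IsNClique 3 T)
    (hsep : ∀ y ∉ T, ∀ u ∈ T, ∀ u' ∈ T, G.Adj y u → G.Adj y u' → u = u') :
    G.Colorable 3 := by
  classical
  have hout (u : V) (hu : u ∈ T) : ∃ x, G.neighborSet u \ T = {x} :=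
    Set.ncard_eq_one.mp (by rw [hT.ncard_neighborSet_sdiff hu, hcubic])
  choose! outer houter using hout
  have houter_mem (u : V) (hu : u ∈ T) : G.Adj u (outer u) ∧ outer u ∉ T := by
    simpa using (houter u hu).symm.subset (Set.mem_singleton (outer u))
  have houter_eq (u : V) (hu : u ∈ T) (y : V) (hy : y ∉ T) (huy : G.Adj u y) : y = outer u := by
    simpa [houter u hu] using (show y ∈ G.neighborSet u \ T from ⟨huy, hy⟩)
  have hmates {u α β : V} (hu : u ∈ T) (hα : G.Adj (outer u) α) (hβ : G.Adj (outer u) β)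
      (hαβ : G.Adj α β) : α ∉ T :=
    notMem_of_triangle_at_outer_neighbor hsep (fun u hu => houter u hu ▸ Set.subsingleton_singleton) hu
      (houter_mem u hu).2 (houter_mem u hu).1 hα hβ hαβ
  have houter_ne (u : V) (hu : u ∈ T) (u' : V) (hu' : u' ∈ T) (h : u ≠ u') :
      outer u ≠ outer u' := fun he =>
    h (hsep _ (houter_mem u hu).2 u hu u' hu' (houter_mem u hu).1.symm
      (he ▸ (houter_mem u' hu').1.symm))
  obtain ⟨r, p, q, hrp, hrq, hpq, rfl⟩ := is3Clique_iff.mp hT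
  have hr : r ∈ ({r, p, q} : Finset V) := by simp
  have hp : p ∈ ({r, p, q} : Finset V) := by simp
  have hq : q ∈ ({r, p, q} : Finset V) := by simp
  obtain ⟨c₀, hc₀⟩ := hconn.exists_isProperOn (k := 2) (fun v => (hcubic v).le) {r, p, q}ᶜ
    (r := r) (by simp)
  rw [Finset.coe_compl] at hc₀
  obtain ⟨c₁, hc₁, hne⟩ := hc₀.exists_not_all_eq (houter_ne r hr p hp hrp.ne)
    (houter_ne r hr q hq hrq.ne) (houter_ne p hp q hq hpq.ne)
    (fun v e => by
      obtain ⟨α, β, hα, hβ, hαβ⟩ := htri v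
      simpa [hcubic] using hc₀.ncard_setOf_adj_color_le hα hβ hαβ e)
    (fun x hx e => by
      obtain ⟨u, hu, rfl⟩ : ∃ u ∈ ({r, p, q} : Finset V), x = outer u := by simpa using hx
      obtain ⟨α, β, hα, hβ, hαβ⟩ := htri (outer u)
      simpa [hcubic] using hc₀.ncard_setOf_adj_color_le_of_adj_notMem (houter_mem u hu).1.symm
        (not_not.mpr hu) hα hβ hαβ (hmates hu hα hβ hαβ) (hmates hu hβ hα hαβ.symm) e)
  refine hc₁.colorable_three_of_triangle hrp hrq hpq hne ?_ ?_ ?_ <;>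
    exact fun y hy hadj => congrArg c₁ (houter_eq _ (by simp) y hy hadj)

theorem colorable_three_of_forall_triangle [Fintype V] (hconn : G.Connected)
    (hdeg : ∀ v, (G.neighborSet v).ncard ≤ 3)
    (hK4 : ¬ Nonempty (G ≃g completeGraph (Fin 4)))
    (htri : ∀ v : V, ∃ a b : V, G.Adj v a ∧ G.Adj v b ∧ G.Adj a b) : G.Colorable 3 := by
  classical
  by_cases hlow : ∃ r, (G.neighborSet r).ncard ≤ 2
  · obtain ⟨r, hr⟩ := hlow
    obtain ⟨c, hc⟩ := hconn.exists_isProperOn (k := 2) hdeg Finset.univ fun _ => hr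
    exact IsProperOn.colorable (by simpa using hc)
  have hcubic (v : V) : (G.neighborSet v).ncard = 3 := by
    push Not at hlow
    exact le_antisymm (hdeg v) (hlow v)
  by_cases hdia : ∃ a u w b, G.IsDiamond a u w b
  · obtain ⟨a, u, w, b, h⟩ := hdia
    exact h.colorable_three hconn hdeg
  push Not at hdia
  obtain ⟨r⟩ := hconn.nonempty
  obtain ⟨p, q, hrp, hrq, hpq⟩ := htri r
  have hT : G.IsNClique 3 {r, p, q} := is3Clique_triple_iff.mpr ⟨hrp, hrq, hpq⟩
  exact hT.colorable_three_of_cubic hconn hcubic htri fun y hy u hu u' hu' =>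
    hT.eq_of_adj_of_adj hconn hdeg hK4 hdia hy hu hu'

theorem Coloring.isDynamicColoring_of_forall_triangle {k : ℕ} (C : G.Coloring (Fin k))
    (htri : ∀ v : V, ∃ a b : V, G.Adj v a ∧ G.Adj v b ∧ G.Adj a b) :
    IsDynamicColoring G k C := by
  refine ⟨fun _ _ huv => C.valid huv, fun v _ => ?_⟩
  obtain ⟨a, b, ha, hb, hab⟩ := htri v
  exact ⟨a, b, ha, hb, C.valid hab⟩

end SimpleGraph

/-- If `G` is a connected graph with maximum degree at most 3, not isomorphic to `K_4`,
in which every vertex is contained in a triangle, then `χ_d(G) ≤ 3`. -/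
theorem dynamic_chromatic_le_three_of_triangles {V : Type*} [Fintype V]
    (G : SimpleGraph V) (hconn : G.Connected)
    (hdeg : ∀ v : V, (G.neighborSet v).ncard ≤ 3)
    (hK4 : ¬ Nonempty (G ≃g completeGraph (Fin 4)))
    (htri : ∀ v : V, ∃ a b : V, G.Adj v a ∧ G.Adj v b ∧ G.Adj a b) :
    dynamicChromaticNumber G ≤ 3 := by
  obtain ⟨C⟩ := colorable_three_of_forall_triangle hconn hdeg hK4 htri
  exact Nat.sInf_le ⟨C, C.isDynamicColoring_of_forall_triangle htri⟩
end

section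
/- Let G ∈ 𝒯 be a graph whose vertex set is partitioned into n vertex-disjoint triangles. Then the independence number of G equals n, i.e., α(G) = n. -/
open SimpleGraph

/-- `idx` exhibits `G` as a graph in the class `𝒯`: the fibers of `idx` are `n`
vertex-disjoint triangles (each fiber has 3 pairwise adjacent vertices), and every
vertex has exactly one neighbor outside its own triangle (so `G` is 3-regular). -/
def TrianglePartition {V : Type*} (G : SimpleGraph V) (n : ℕ) (idx : V → Fin n) : Prop :=
  (∀ u v : V, u ≠ v → idx u = idx v → G.Adj u v) ∧
  (∀ i : Fin n, (idx ⁻¹' {i}).ncard = 3) ∧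
  (∀ v : V, {u : V | G.Adj v u ∧ idx u ≠ idx v}.ncard = 1)

/-- `s` is an independent set of `G`. -/
def IsIndepSet' {V : Type*} (G : SimpleGraph V) (s : Set V) : Prop :=
  ∀ ⦃u : V⦄, u ∈ s → ∀ ⦃v : V⦄, v ∈ s → ¬ G.Adj u v

/-- The independence number `α(G)`. -/
noncomputable def indepNumber {V : Type*} (G : SimpleGraph V) : ℕ :=
  sSup {k : ℕ | ∃ s : Set V, IsIndepSet' G s ∧ s.ncard = k}

/-!
An independent set meets each triangle at most once, so `α(G) ≤ n`. Conversely, the edges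
leaving the triangles form a perfect matching `v ↦ m v`. Any `k` triangles have `3k` vertices,
hence meet at least `3k / 2 ≥ k` matching edges, so by Hall's theorem every triangle can be
assigned a matching edge of its own. Picking in each triangle the endpoint of its edge yields
`n` vertices no two of which are matched, i.e. an independent set.
-/

open Finset Function

theorem card_le_two_mul_card_image_sym2 {V : Type*} [DecidableEq V] (m : V → V) (B : Finset V) :
    #B ≤ 2 * #(B.image fun v => s(v, m v)) := by
  refine card_le_mul_card_image B 2 fun _ hb => ?_
  obtain ⟨v, -, rfl⟩ := mem_image.mp hb
  calc #{w ∈ B | s(w, m w) = s(v, m v)} ≤ #({v, m v} : Finset V) := by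
        refine card_le_card fun w hw => ?_
        rcases Sym2.eq_iff.mp (mem_filter.mp hw).2 with ⟨rfl, -⟩ | ⟨rfl, -⟩ <;> simp
    _ ≤ 2 := card_le_two

theorem exists_section_forall_ne_apply {V ι : Type*} (idx : V → ι) (m : V → V)
    (hm : Involutive m) (hfib : ∀ i, 2 ≤ (idx ⁻¹' {i}).ncard) :
    ∃ g : ι → V, LeftInverse idx g ∧ ∀ i j, i ≠ j → g j ≠ m (g i) := by
  classical
  -- `ncard` vanishes on infinite sets, so the fibers are finite.
  have hfin (i : ι) : (idx ⁻¹' {i}).Finite :=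
    Set.finite_of_ncard_pos (two_pos.trans_le (hfib i))
  set F : ι → Finset V := fun i => (hfin i).toFinset
  set e : V → Sym2 V := fun v => s(v, m v)
  have hall (A : Finset ι) : #A ≤ #(A.biUnion fun i => (F i).image e) := by
    have hdisj : (A : Set ι).PairwiseDisjoint F := by
      intro i _ j _ hij
      simpa [F, Finset.disjoint_left] using fun _ hi hj => hij (hi.symm.trans hj)
    have hB : 2 * #A ≤ #(A.biUnion F) := by
      rw [card_biUnion hdisj, mul_comm, ← smul_eq_mul, ← sum_const]
      exact sum_le_sum fun i _ => by simpa [F, ← Set.ncard_eq_toFinset_card] using hfib i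
    have hE : #(A.biUnion F) ≤ 2 * #((A.biUnion F).image e) :=
      card_le_two_mul_card_image_sym2 m _
    rw [biUnion_image] at hE
    omega
  obtain ⟨f, hf, hft⟩ := (all_card_le_biUnion_card_iff_exists_injective _).mp hall
  choose g hgF hge using fun i => mem_image.mp (hft i)
  refine ⟨g, fun i => by simpa [F] using hgF i, fun i j hij hgj => hij (hf ?_)⟩
  rw [← hge, ← hge, hgj]
  simp only [e, hm (g i)]
  exact Sym2.eq_swap

theorem exists_involutive_iff_of_ncard_eq_one {V : Type*} {r : V → V → Prop}
    (hr : ∀ u v, r u v → r v u) (h : ∀ v, {u | r v u}.ncard = 1) :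
    ∃ m : V → V, Involutive m ∧ ∀ v u, r v u ↔ u = m v := by
  choose m hm using fun v => Set.ncard_eq_one.mp (h v)
  have hrm (v u : V) : r v u ↔ u = m v := Set.ext_iff.mp (hm v) u
  exact ⟨m, fun v => ((hrm _ _).mp (hr _ _ ((hrm v _).mpr rfl))).symm, hrm⟩

theorem IsIndepSet'.ncard_le_card {V ι : Type*} [Finite ι] {G : SimpleGraph V} {s : Set V}
    (idx : V → ι) (hclique : ∀ u v, u ≠ v → idx u = idx v → G.Adj u v)
    (hs : IsIndepSet' G s) : s.ncard ≤ Nat.card ι := by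
  have hinj : Set.InjOn idx s := fun u hu v hv huv =>
    by_contra fun hne => hs hu hv (hclique u v hne huv)
  rw [← hinj.ncard_image]
  exact Set.ncard_le_card _

theorem IsIndepSet'.indepNumber_eq {V : Type*} {G : SimpleGraph V} {s : Set V} {k : ℕ}
    (hs : IsIndepSet' G s) (hsk : s.ncard = k) (hle : ∀ t, IsIndepSet' G t → t.ncard ≤ k) :
    indepNumber G = k := by
  have hk : k ∈ {k : ℕ | ∃ s : Set V, IsIndepSet' G s ∧ s.ncard = k} := ⟨s, hs, hsk⟩
  have hub : k ∈ upperBounds {k : ℕ | ∃ s : Set V, IsIndepSet' G s ∧ s.ncard = k} := by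
    rintro _ ⟨t, ht, rfl⟩
    exact hle t ht
  exact le_antisymm (csSup_le ⟨k, hk⟩ hub) (le_csSup ⟨k, hub⟩ hk)

theorem indepNumber_of_trianglePartition_general {V : Type*} (G : SimpleGraph V)
    (n : ℕ) (idx : V → Fin n) (hT : TrianglePartition G n idx) :
    indepNumber G = n := by
  obtain ⟨hclique, hfib, hout⟩ := hT
  obtain ⟨m, hm, hout_iff⟩ := exists_involutive_iff_of_ncard_eq_one
    (r := fun v u => G.Adj v u ∧ idx u ≠ idx v) (fun _ _ h => ⟨h.1.symm, h.2.symm⟩) hout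
  obtain ⟨g, hg, hgm⟩ :=
    exists_section_forall_ne_apply idx m hm fun i => (hfib i).ge.trans' (by norm_num)
  refine IsIndepSet'.indepNumber_eq (s := Set.range g) ?_ ?_ fun t ht => by
    simpa using ht.ncard_le_card idx hclique
  · rintro _ ⟨i, rfl⟩ _ ⟨j, rfl⟩ hadj
    have hij : i ≠ j := by
      rintro rfl
      exact G.irrefl hadj
    exact hgm i j hij ((hout_iff _ _).mp ⟨hadj, by rw [hg, hg]; exact hij.symm⟩)
  · rw [Set.ncard_range_of_injective hg.injective, Nat.card_fin]

/-- If the vertex set of `G ∈ 𝒯` is partitioned into `n` vertex-disjoint triangles,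
then `α(G) = n`. -/
theorem indepNumber_of_trianglePartition {V : Type*} [Fintype V] (G : SimpleGraph V)
    (n : ℕ) (idx : V → Fin n) (hT : TrianglePartition G n idx) :
    indepNumber G = n :=
  indepNumber_of_trianglePartition_general G n idx hT
end

section
/- Let G ∈ 𝒯 be a graph whose vertex set is partitioned into n vertex-disjoint triangles, and let S be any maximum independent set of G. Then the subgraph of G induced by V(G) \ S is bipartite. -/
open SimpleGraph

/-!
Choose in each triangle the endpoint of an external edge, distinct triangles choosing distinct
edges; this is possible by Hall's theorem, since `k` triangles meet at least `3k/2` external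
edges. The chosen vertices form an independent set of size `n`, so the maximum independent set
`S` meets every triangle exactly once. Each triangle then leaves one edge outside `S`, and
`G[Sᶜ]` is spanned by the perfect matching `σ` formed by these edges and the part `τ` of the
external matching avoiding `S`. A graph spanned by two fixed-point-free involutions is bipartite:
a closed walk of odd length would give an odd word in `σ` and `τ` with a fixed point, but odd
words are conjugate to `σ` or `τ`.
-/

open Function

theorem mul_zpow_mul_eq_zpow_neg_mul {G : Type*} [Group G] {s t : G} (hs : s * s = 1)
    (ht : t * t = 1) (k : ℤ) : s * (t * s) ^ k = (t * s) ^ (-k) * s := by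
  have hs' : s⁻¹ = s := inv_eq_of_mul_eq_one_right hs
  have hconj : s * (t * s) * s⁻¹ = (t * s)⁻¹ := by
    rw [hs', mul_inv_rev, hs', inv_eq_of_mul_eq_one_right ht, mul_assoc, mul_assoc, hs, mul_one]
  calc s * (t * s) ^ k = s * (t * s) ^ k * s⁻¹ * s := by group
    _ = (t * s) ^ (-k) * s := by rw [← conj_zpow, hconj, inv_zpow, zpow_neg]

theorem Function.exists_involutive_of_existsUnique {X : Type*} {r : X → X → Prop}
    (hr : ∀ x y, r x y → r y x) (h : ∀ x, ∃! y, r x y) :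
    ∃ σ : X → X, Involutive σ ∧ ∀ x y, r x y ↔ y = σ x := by
  choose σ hσ huniq using h
  have hiff : ∀ x y, r x y ↔ y = σ x := fun x y => ⟨huniq x y, fun h => h ▸ hσ x⟩
  exact ⟨σ, fun x => ((hiff _ _).1 (hr _ _ (hσ x))).symm, hiff⟩

theorem Function.Involutive.exists_involutive_restrict {X : Type*} {m : X → X}
    (hm : Involutive m) (T : Set X) :
    ∃ τ : T → T, Involutive τ ∧ ∀ x : T, m x ∈ T → (τ x : X) = m x := by
  classical
  refine ⟨fun x => if h : m x ∈ T then ⟨m x, h⟩ else x, fun x => ?_, fun x hx => by simp [hx]⟩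
  by_cases h : m x ∈ T
  · simp [h, hm x]
  · simp [h]

namespace Equiv.Perm

variable {X : Type*} {σ τ : Perm X}

theorem mul_zpow_mul_apply_ne_self (hσ : Involutive σ) (hτ : Involutive τ)
    (hσf : ∀ x, σ x ≠ x) (hτf : ∀ x, τ x ≠ x) (k : ℤ) (x : X) :
    (σ * (τ * σ) ^ k) x ≠ x := by
  have hconj (j r : ℤ) : σ * (τ * σ) ^ (2 * j + r) =
      ((τ * σ) ^ j)⁻¹ * (σ * (τ * σ) ^ r) * (τ * σ) ^ j := by
    rw [show 2 * j + r = j + r + j by ring, zpow_add, zpow_add, ← mul_assoc, ← mul_assoc,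
      mul_zpow_mul_eq_zpow_neg_mul (Equiv.ext hσ) (Equiv.ext hτ), zpow_neg]
    simp only [mul_assoc]
  -- Writing `k = 2j + r`, the word is conjugate to `σ` (if `r = 0`) or to `στσ` (if `r = 1`).
  obtain ⟨j, rfl | rfl⟩ := Int.even_or_odd' k <;> intro h
  · rw [← add_zero (2 * j), hconj] at h
    apply hσf (((τ * σ) ^ j) x)
    rw [Perm.mul_apply, Perm.mul_apply, Perm.inv_eq_iff_eq] at h
    simpa using h
  · rw [hconj] at h
    apply hτf (σ (((τ * σ) ^ j) x))
    rw [Perm.mul_apply, Perm.mul_apply, Perm.inv_eq_iff_eq] at h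
    simp only [zpow_one, Perm.mul_apply] at h
    exact hσ.injective (h.trans (hσ _).symm)

end Equiv.Perm

namespace SimpleGraph

variable {X : Type*}

def involutionGraph (σ τ : X → X) : SimpleGraph X :=
  fromRel fun x y => y = σ x ∨ y = τ x

theorem involutionGraph_adj {σ τ : X → X} (hσ : Involutive σ) (hτ : Involutive τ) {x y : X} :
    (involutionGraph σ τ).Adj x y ↔ x ≠ y ∧ (y = σ x ∨ y = τ x) := by
  have hsymm {f : X → X} (hf : Involutive f) : x = f y ↔ y = f x := by
    constructor <;> rintro rfl <;> exact (hf _).symm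
  rw [involutionGraph, fromRel_adj, hsymm hσ, hsymm hτ, or_self]

theorem Walk.exists_zpow_apply_eq {H : SimpleGraph X} {σ τ : Equiv.Perm X} (hσ : Involutive σ)
    (hτ : Involutive τ) (hH : ∀ x y, H.Adj x y → y = σ x ∨ y = τ x) {u v : X}
    (p : H.Walk u v) : ∃ k : ℤ, (Even p.length ∧ u = ((τ * σ) ^ k) v) ∨
      (Odd p.length ∧ u = (σ * (τ * σ) ^ k) v) := by
  induction p with
  | nil => exact ⟨0, Or.inl ⟨Even.zero, rfl⟩⟩
  | cons hadj p ih =>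
    have hτ_eq : τ = σ * (τ * σ)⁻¹ := by
      rw [mul_inv_rev, mul_inv_cancel_left, inv_eq_of_mul_eq_one_right (Equiv.ext hτ : τ * τ = 1)]
    obtain ⟨k, ⟨he, hk⟩ | ⟨ho, hk⟩⟩ := ih <;> rcases hH _ _ hadj.symm with hu | hu <;>
      rw [Walk.length_cons]
    · exact ⟨k, Or.inr ⟨he.add_one, by rw [hu, hk]; rfl⟩⟩
    · refine ⟨k - 1, Or.inr ⟨he.add_one, ?_⟩⟩
      rw [hu, hk, show k - 1 = -1 + k by ring, zpow_add, zpow_neg_one, ← mul_assoc, ← hτ_eq]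
      rfl
    · exact ⟨k, Or.inl ⟨ho.add_one, by rw [hu, hk, Equiv.Perm.mul_apply, hσ]⟩⟩
    · refine ⟨1 + k, Or.inl ⟨ho.add_one, ?_⟩⟩
      rw [hu, hk, zpow_add, zpow_one]
      rfl

theorem involutionGraph_colorable_two_of_fixedPointFree {σ τ : X → X} (hσ : Involutive σ)
    (hτ : Involutive τ) (hσf : ∀ x, σ x ≠ x) (hτf : ∀ x, τ x ≠ x) :
    (involutionGraph σ τ).Colorable 2 := by
  refine two_colorable_iff_forall_loop_even.2 fun u p => ?_
  obtain ⟨k, ⟨he, -⟩ | ⟨-, hu⟩⟩ := p.exists_zpow_apply_eq (σ := hσ.toPerm) (τ := hτ.toPerm)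
    hσ hτ fun x y h => ((involutionGraph_adj hσ hτ).1 h).2
  · exact he
  · exact absurd hu.symm (Equiv.Perm.mul_zpow_mul_apply_ne_self (σ := hσ.toPerm) (τ := hτ.toPerm)
      hσ hτ hσf hτf k u)

theorem involutionGraph_colorable_two {σ τ : X → X} (hσ : Involutive σ) (hτ : Involutive τ)
    (hσf : ∀ x, σ x ≠ x) : (involutionGraph σ τ).Colorable 2 := by
  classical
  -- Doubling `X` turns each fixed point `x` of `τ` into a `τ`-edge between the two copies of `x`.
  let σ' : X × Bool → X × Bool := fun p => (σ p.1, p.2)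
  let τ' : X × Bool → X × Bool := fun p => if τ p.1 = p.1 then (p.1, !p.2) else (τ p.1, p.2)
  have hσ' : Involutive σ' := fun p => by simp [σ', hσ p.1]
  have hτ' : Involutive τ' := by
    rintro ⟨x, b⟩
    by_cases h : τ x = x
    · simp [τ', h]
    · simp [τ', h, Ne.symm h, hτ x]
  have hτ'f : ∀ p, τ' p ≠ p := by
    rintro ⟨x, b⟩
    by_cases h : τ x = x <;> simp [τ', h]
  refine (involutionGraph_colorable_two_of_fixedPointFree hσ' hτ'
    (fun p h => hσf p.1 (congrArg Prod.fst h)) hτ'f).of_hom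
    ⟨fun x => (x, false), fun {x y} hxy => ?_⟩
  obtain ⟨hne, rfl | rfl⟩ := (involutionGraph_adj hσ hτ).1 hxy <;>
    rw [involutionGraph_adj hσ' hτ']
  · simp [σ', hne]
  · simp [τ', hne, Ne.symm hne]

end SimpleGraph

open Finset in
theorem card_le_card_biUnion_image_sym2 {V ι : Type*} [Fintype V] [DecidableEq V]
    [DecidableEq ι] {idx : V → ι} (hfib : ∀ i, 2 ≤ #(univ.filter (idx · = i))) (m : V → V)
    (s : Finset ι) :
    #s ≤ #(s.biUnion fun i => (univ.filter (idx · = i)).image fun v => s(v, m v)) := by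
  rw [← biUnion_image]
  set A := s.biUnion fun i => univ.filter (idx · = i)
  have hA : 2 * #s ≤ #A := by
    rw [card_biUnion fun i _ j _ hij => disjoint_filter.2 fun v _ hi hj => hij (hi ▸ hj)]
    calc 2 * #s = ∑ _ ∈ s, 2 := by rw [sum_const, smul_eq_mul, mul_comm]
      _ ≤ _ := sum_le_sum fun i _ => hfib i
  -- Each unordered pair `s(v, m v)` arises from at most its two endpoints.
  have hfiber : ∀ a ∈ A.image fun v => s(v, m v), #{v ∈ A | s(v, m v) = a} ≤ 2 := by
    intro a ha
    obtain ⟨w, -, rfl⟩ := mem_image.1 ha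
    refine (card_le_card fun v hv => ?_).trans (card_le_two (a := w) (b := m w))
    rcases Sym2.eq_iff.1 (mem_filter.1 hv).2 with ⟨rfl, -⟩ | ⟨rfl, -⟩ <;> simp
  have := card_le_mul_card_image A 2 hfiber
  omega

namespace TrianglePartition

variable {V : Type*} {G : SimpleGraph V} {n : ℕ} {idx : V → Fin n}

theorem exists_external_involution (hT : TrianglePartition G n idx) :
    ∃ m : V → V, Involutive m ∧ ∀ u v, G.Adj u v ∧ idx v ≠ idx u ↔ v = m u := by
  refine Function.exists_involutive_of_existsUnique
    (fun _ _ h => ⟨h.1.symm, h.2.symm⟩) fun u => ?_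
  obtain ⟨w, hw⟩ := Set.ncard_eq_one.1 (hT.2.2 u)
  refine ⟨w, ?_, fun y hy => ?_⟩
  · exact (hw.symm ▸ rfl : w ∈ {v | G.Adj u v ∧ idx v ≠ idx u})
  · exact (hw ▸ hy : y ∈ ({w} : Set V))

theorem exists_indep_transversal [Fintype V] (hT : TrianglePartition G n idx) :
    ∃ f : Fin n → V, (∀ i, idx (f i) = i) ∧ IsIndepSet' G (Set.range f) := by
  classical
  obtain ⟨m, -, hm⟩ := hT.exists_external_involution
  have hfib (i : Fin n) : 2 ≤ (Finset.univ.filter (idx · = i)).card := by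
    have := hT.2.1 i
    rw [Set.ncard_eq_toFinset_card'] at this
    simp_all
  obtain ⟨e, he_inj, he⟩ := (Finset.all_card_le_biUnion_card_iff_exists_injective _).1
    (card_le_card_biUnion_image_sym2 hfib m)
  choose f hf hfe using fun i => Finset.mem_image.1 (he i)
  simp only [Finset.mem_filter, Finset.mem_univ, true_and] at hf
  refine ⟨f, hf, ?_⟩
  rintro _ ⟨i, rfl⟩ _ ⟨j, rfl⟩ hadj
  have hij : i ≠ j := by
    rintro rfl
    exact G.irrefl hadj
  have hji : f j = m (f i) := (hm _ _).1 ⟨hadj, by rw [hf, hf]; exact hij.symm⟩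
  have hfi : f i = m (f j) := (hm _ _).1 ⟨hadj.symm, by rw [hf, hf]; exact hij⟩
  apply hij (he_inj _)
  rw [← hfe i, ← hfe j, ← hji, ← hfi]
  exact Sym2.eq_swap

theorem forall_exists_mem_of_le_ncard (hT : TrianglePartition G n idx) {S : Set V}
    (hS : IsIndepSet' G S) (h : n ≤ S.ncard) : ∀ i, ∃ v ∈ S, idx v = i := by
  have hinj : S.InjOn idx := fun u hu v hv huv =>
    by_contra fun hne => hS hu hv (hT.1 u v hne huv)
  have himage : idx '' S = Set.univ := Set.eq_of_subset_of_ncard_le (Set.subset_univ _) (by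
    rwa [hinj.ncard_image, Set.ncard_univ, Nat.card_eq_fintype_card, Fintype.card_fin])
  exact fun i => (himage.symm ▸ Set.mem_univ i : i ∈ idx '' S)

theorem existsUnique_mate (hT : TrianglePartition G n idx) {S : Set V} (hS : IsIndepSet' G S)
    (hcover : ∀ i, ∃ v ∈ S, idx v = i) (x : ↥Sᶜ) : ∃! y : ↥Sᶜ, y ≠ x ∧ idx y = idx x := by
  obtain ⟨s, hsS, hs⟩ := hcover (idx x)
  have hsx : s ≠ x := fun h => x.2 (h ▸ hsS)
  have hthird : (idx ⁻¹' {idx x} \ {(x : V), s}).ncard = 1 := by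
    have hsub : {(x : V), s} ⊆ idx ⁻¹' {idx x} := Set.pair_subset rfl hs
    rw [Set.ncard_sdiff hsub, hT.2.1, Set.ncard_pair hsx.symm]
  obtain ⟨w, hw⟩ := Set.ncard_eq_one.1 hthird
  have hw' : w ∈ idx ⁻¹' {idx x} \ {(x : V), s} := hw ▸ rfl
  simp only [Set.mem_sdiff, Set.mem_preimage, Set.mem_singleton_iff, Set.mem_insert_iff,
    not_or] at hw'
  have hiff (y : ↥Sᶜ) : y ≠ x ∧ idx y = idx x ↔ (y : V) = w := by
    rw [← Set.mem_singleton_iff (a := (y : V)), ← hw]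
    simp only [Set.mem_sdiff, Set.mem_preimage, Set.mem_singleton_iff, Set.mem_insert_iff,
      not_or, ne_eq, ← Subtype.ext_iff]
    exact ⟨fun h => ⟨h.2, h.1, fun hys => y.2 (hys ▸ hsS)⟩, fun h => ⟨h.2.1, h.1⟩⟩
  have hwS : w ∉ S := fun hwS => hS hwS hsS (hT.1 _ _ hw'.2.2 (hw'.1.trans hs.symm))
  exact ⟨⟨w, hwS⟩, (hiff _).2 rfl, fun y hy => Subtype.ext ((hiff y).1 hy)⟩

end TrianglePartition

/-- If `G ∈ 𝒯` and `S` is a maximum independent set of `G`, then the subgraph of `G`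
induced by `V(G) \ S` is bipartite (i.e. 2-colorable). -/
theorem induce_compl_maxIndep_bipartite {V : Type*} [Fintype V] (G : SimpleGraph V)
    (n : ℕ) (idx : V → Fin n) (hT : TrianglePartition G n idx) (S : Set V)
    (hS : IsIndepSet' G S) (hmax : ∀ T : Set V, IsIndepSet' G T → T.ncard ≤ S.ncard) :
    (G.induce (Sᶜ : Set V)).Colorable 2 := by
  obtain ⟨f, hf_idx, hf_indep⟩ := hT.exists_indep_transversal
  have hn : n ≤ S.ncard := by
    simpa [Set.ncard_range_of_injective (LeftInverse.injective hf_idx)] using hmax _ hf_indep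
  obtain ⟨σ, hσ, hσ_iff⟩ := exists_involutive_of_existsUnique
    (fun _ _ h => ⟨h.1.symm, h.2.symm⟩)
    (hT.existsUnique_mate hS (hT.forall_exists_mem_of_le_ncard hS hn))
  obtain ⟨m, hm, hm_iff⟩ := hT.exists_external_involution
  obtain ⟨τ, hτ, hτ_eq⟩ := hm.exists_involutive_restrict Sᶜ
  refine (involutionGraph_colorable_two hσ hτ fun x hx => ((hσ_iff x x).2 hx.symm).1 rfl).mono_left
    fun x y hxy => (involutionGraph_adj hσ hτ).2 ⟨hxy.ne, ?_⟩
  by_cases hidx : idx y = idx x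
  · exact Or.inl ((hσ_iff x y).1 ⟨hxy.ne.symm, hidx⟩)
  · have hy : (y : V) = m x := (hm_iff x y).1 ⟨hxy, hidx⟩
    exact Or.inr (Subtype.ext (hy.trans (hτ_eq x (hy ▸ y.2)).symm))
end

section
/- Let G ∈ 𝒯 be a graph whose vertex set is partitioned into n vertex-disjoint triangles, and let S be any maximum independent set of G. Then in the subgraph of G induced by V(G) \ S, no two triangle-edges of G are adjacent and no two non-triangle edges of G are adjacent; consequently every cycle of this induced subgraph alternates between triangle-edges and non-triangle edges and has even length. -/
/-!
Choosing greedily one vertex per triangle, each choice forbids only its unique outside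
neighbour, so `G` has an independent set of size `n`. An independent set meets each triangle at
most once, so a maximum one meets every triangle, and at most two vertices of a triangle survive
outside `S`: no two triangle edges of `G - S` share a vertex. Two non-triangle edges at a common
vertex would give it two outside neighbours. Hence the edge types alternate along every cycle of
`G - S`, which forces even length.
-/

open SimpleGraph

theorem isIndepSet'_iff {V : Type*} {G : SimpleGraph V} {s : Set V} :
    IsIndepSet' G s ↔ G.IsIndepSet s :=
  ⟨fun h _ hu _ hv _ => h hu hv, fun h u hu v hv huv => h hu hv huv.ne huv⟩

theorem SimpleGraph.Walk.IsCycle.even_length_of_alternating {V : Type*} {G : SimpleGraph V}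
    (t : V → V → Prop) (ht : ∀ a b c, G.Adj a b → G.Adj b c → a ≠ c → (t a b ↔ ¬ t b c))
    {u : V} {p : G.Walk u u} (hp : p.IsCycle) : Even p.length := by
  have hlen := hp.three_le_length
  set f : ℕ → Prop := fun i => t (p.getVert i) (p.getVert (i + 1))
  have step : ∀ i, i + 1 < p.length → (f i ↔ ¬ f (i + 1)) := fun i hi =>
    ht _ _ _ (p.adj_getVert_succ (by omega)) (p.adj_getVert_succ hi)
      (by simpa using hp.getVert_sub_one_ne_getVert_add_one (i := i + 1) (by omega))
  have parity : ∀ i, i < p.length → (f i ↔ (Even i ↔ f 0)) := by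
    intro i
    induction i with
    | zero => simp
    | succ i ih =>
      intro hi
      have hprev := ih (by omega)
      have hstep := step i hi
      rw [Nat.even_add_one]
      tauto
  have wrap : f (p.length - 1) ↔ ¬ f 0 := by
    have hlast : p.getVert (p.length - 1 + 1) = p.getVert 0 := by
      rw [Nat.sub_add_cancel (by omega), p.getVert_length, p.getVert_zero]
    have hturn := ht _ _ _ (hlast ▸ p.adj_getVert_succ (by omega))
      (p.adj_getVert_succ (i := 0) (by omega)) hp.snd_ne_penultimate.symm
    show t _ _ ↔ ¬ t _ _
    rw [hlast]
    exact hturn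
  have hodd : ¬ Even (p.length - 1) := by
    have hlast := parity (p.length - 1) (by omega)
    tauto
  rcases Nat.even_or_odd p.length with he | ⟨r, hr⟩
  · exact he
  · exact absurd ⟨r, by omega⟩ hodd

namespace TrianglePartition

variable {V : Type*} {G : SimpleGraph V} {n : ℕ} {idx : V → Fin n}

theorem adj_of_idx_eq (hT : TrianglePartition G n idx) {u v : V} (huv : u ≠ v)
    (h : idx u = idx v) : G.Adj u v :=
  hT.1 u v huv h

theorem subsingleton_outsideNeighbors (hT : TrianglePartition G n idx) (v : V) :
    {u : V | G.Adj v u ∧ idx u ≠ idx v}.Subsingleton := by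
  obtain ⟨z, hz⟩ := Set.ncard_eq_one.mp (hT.2.2 v)
  exact hz ▸ Set.subsingleton_singleton

theorem eq_of_adj_of_idx_ne (hT : TrianglePartition G n idx) {v u w : V} (hu : G.Adj v u)
    (hw : G.Adj v w) (hu' : idx u ≠ idx v) (hw' : idx w ≠ idx v) : u = w :=
  hT.subsingleton_outsideNeighbors v ⟨hu, hu'⟩ ⟨hw, hw'⟩

theorem eq_fiber_of_idx_eq (hT : TrianglePartition G n idx) {u v w : V} (huv : u ≠ v)
    (huw : u ≠ w) (hvw : v ≠ w) (hv : idx v = idx u) (hw : idx w = idx u) :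
    ({u, v, w} : Set V) = idx ⁻¹' {idx u} := by
  refine Set.eq_of_subset_of_ncard_le ?_ ?_ (Set.finite_of_ncard_ne_zero (by simp [hT.2.1]))
  · rintro x (rfl | rfl | rfl) <;> simp_all
  · rw [hT.2.1, Set.ncard_eq_three.mpr ⟨u, v, w, huv, huw, hvw, rfl⟩]

theorem injOn_of_isIndepSet (hT : TrianglePartition G n idx) {s : Set V}
    (hs : G.IsIndepSet s) : Set.InjOn idx s := fun _ hu _ hv h =>
  of_not_not fun huv => hs hu hv huv (hT.adj_of_idx_eq huv h)

theorem exists_notMem_of_subsingleton (hT : TrianglePartition G n idx) (i : Fin n)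
    {F : Set V} (hF : F.Subsingleton) : ∃ x, idx x = i ∧ x ∉ F := by
  by_contra! h
  have : (idx ⁻¹' {i}).ncard ≤ F.ncard := Set.ncard_le_ncard h hF.finite
  rw [hT.2.1] at this
  linarith [(Set.ncard_le_one hF.finite).mpr fun _ ha _ hb => hF ha hb]

/-- The triangle of the forbidden vertex is treated first, so that only the outside neighbour of
the chosen vertex is forbidden in the recursive call. -/
theorem exists_isIndepSet_image_eq (hT : TrianglePartition G n idx) [DecidableEq V]
    (A : Finset (Fin n)) (F : Set V) (hF : F.Subsingleton) :
    ∃ X : Finset V, G.IsIndepSet X ∧ X.image idx = A ∧ Disjoint (X : Set V) F := by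
  induction A using Finset.strongInduction generalizing F with
  | H A ih =>
  rcases A.eq_empty_or_nonempty with rfl | ⟨j, hj⟩
  · exact ⟨∅, by simp, by simp, by simp⟩
  obtain ⟨i, hiA, hFi⟩ : ∃ i ∈ A, ∀ f ∈ F, idx f ∈ A → idx f = i := by
    by_cases h : ∃ f ∈ F, idx f ∈ A
    · obtain ⟨f, hf, hfA⟩ := h
      exact ⟨idx f, hfA, fun f' hf' _ => by rw [hF hf' hf]⟩
    · exact ⟨j, hj, fun f hf hfA => absurd ⟨f, hf, hfA⟩ h⟩
  obtain ⟨x, hxi, hxF⟩ := hT.exists_notMem_of_subsingleton i hF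
  obtain ⟨X, hX, hXA, hXF⟩ := ih (A.erase i) (Finset.erase_ssubset hiA) _
    (hT.subsingleton_outsideNeighbors x)
  have hXi : ∀ y ∈ X, idx y ≠ i ∧ idx y ∈ A := fun y hy =>
    Finset.mem_erase.mp (hXA ▸ Finset.mem_image_of_mem idx hy)
  refine ⟨insert x X, ?_, ?_, ?_⟩
  · have hxX : ∀ y ∈ (X : Set V), ¬ G.Adj x y := fun y hy hxy =>
      Set.disjoint_left.mp hXF hy ⟨hxy, hxi ▸ (hXi y hy).1⟩
    rw [Finset.coe_insert]
    exact hX.insert fun y hy _ => ⟨hxX y hy, fun hyx => hxX y hy hyx.symm⟩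
  · rw [Finset.image_insert, hXA, hxi, Finset.insert_erase hiA]
  · rw [Finset.coe_insert, Set.disjoint_insert_left]
    refine ⟨hxF, Set.disjoint_left.mpr fun y hy hyF => ?_⟩
    exact (hXi y hy).1 (hFi y hyF (hXi y hy).2)

theorem exists_isIndepSet_ncard_eq (hT : TrianglePartition G n idx) :
    ∃ X : Set V, G.IsIndepSet X ∧ X.ncard = n := by
  classical
  obtain ⟨X, hX, hXA, -⟩ := hT.exists_isIndepSet_image_eq Finset.univ ∅ Set.subsingleton_empty
  refine ⟨X, hX, ?_⟩
  rw [Set.ncard_coe_finset, ← Finset.card_image_of_injOn (hT.injOn_of_isIndepSet hX), hXA,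
    Finset.card_univ, Fintype.card_fin]

theorem exists_mem_idx_eq_of_maximum (hT : TrianglePartition G n idx) {S : Set V}
    (hS : G.IsIndepSet S) (hmax : ∀ T : Set V, G.IsIndepSet T → T.ncard ≤ S.ncard) (i : Fin n) :
    ∃ s ∈ S, idx s = i := by
  obtain ⟨X, hX, hXn⟩ := hT.exists_isIndepSet_ncard_eq
  have himage : idx '' S = Set.univ := by
    refine Set.eq_of_subset_of_ncard_le (Set.subset_univ _) ?_ Set.finite_univ
    rw [Set.ncard_univ, Nat.card_eq_fintype_card, Fintype.card_fin,
      (hT.injOn_of_isIndepSet hS).ncard_image, ← hXn]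
    exact hmax X hX
  exact (himage ▸ Set.mem_univ i : i ∈ idx '' S)

theorem not_three_notMem_of_maximum (hT : TrianglePartition G n idx) {S : Set V}
    (hS : G.IsIndepSet S) (hmax : ∀ T : Set V, G.IsIndepSet T → T.ncard ≤ S.ncard)
    {u v w : V} (hu : u ∉ S) (hv : v ∉ S) (hw : w ∉ S) (huv : u ≠ v) (huw : u ≠ w) (hvw : v ≠ w)
    (hvu : idx v = idx u) (hwu : idx w = idx u) : False := by
  obtain ⟨s, hsS, hs⟩ := hT.exists_mem_idx_eq_of_maximum hS hmax (idx u)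
  have : s ∈ ({u, v, w} : Set V) := hT.eq_fiber_of_idx_eq huv huw hvw hvu hwu ▸ hs
  rcases this with rfl | rfl | rfl
  exacts [hu hsS, hv hsS, hw hsS]

end TrianglePartition

theorem alternating_cycles_of_trianglePartition_general {V : Type*}
    (G : SimpleGraph V) (n : ℕ) (idx : V → Fin n) (hT : TrianglePartition G n idx)
    (S : Set V) (hS : IsIndepSet' G S)
    (hmax : ∀ T : Set V, IsIndepSet' G T → T.ncard ≤ S.ncard) :
    (∀ u v w : V, u ∉ S → v ∉ S → w ∉ S → u ≠ w → G.Adj u v → G.Adj v w →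
      ¬ (idx u = idx v ∧ idx v = idx w) ∧ ¬ (idx u ≠ idx v ∧ idx v ≠ idx w)) ∧
    (∀ (x : (Sᶜ : Set V)) (p : (G.induce (Sᶜ : Set V)).Walk x x),
      p.IsCycle → Even p.length) := by
  simp only [isIndepSet'_iff] at hS hmax
  have alternating : ∀ u v w : V, u ∉ S → v ∉ S → w ∉ S → u ≠ w → G.Adj u v → G.Adj v w →
      ¬ (idx u = idx v ∧ idx v = idx w) ∧ ¬ (idx u ≠ idx v ∧ idx v ≠ idx w) :=
    fun u v w hu hv hw huw huv hvw =>
      ⟨fun ⟨h1, h2⟩ => hT.not_three_notMem_of_maximum hS hmax hu hv hw huv.ne huw hvw.ne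
          h1.symm (h1.trans h2).symm,
        fun ⟨h1, h2⟩ => huw (hT.eq_of_adj_of_idx_ne huv.symm hvw h1 (Ne.symm h2))⟩
  refine ⟨alternating, fun x p hp =>
    hp.even_length_of_alternating (fun a b : (Sᶜ : Set V) => idx a = idx b) ?_⟩
  intro a b c hab hbc hac
  have := alternating a b c a.2 b.2 c.2 (Subtype.coe_injective.ne hac) hab hbc
  tauto

/-- If `G ∈ 𝒯` and `S` is a maximum independent set of `G`, then in the subgraph
induced by `V(G) \ S` no two triangle-edges are adjacent and no two non-triangle
edges are adjacent (an edge `uv` is a triangle-edge when `idx u = idx v`);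
consequently every cycle of this induced subgraph has even length. -/
theorem alternating_cycles_of_trianglePartition {V : Type*} [Fintype V]
    (G : SimpleGraph V) (n : ℕ) (idx : V → Fin n) (hT : TrianglePartition G n idx)
    (S : Set V) (hS : IsIndepSet' G S)
    (hmax : ∀ T : Set V, IsIndepSet' G T → T.ncard ≤ S.ncard) :
    (∀ u v w : V, u ∉ S → v ∉ S → w ∉ S → u ≠ w → G.Adj u v → G.Adj v w →
      ¬ (idx u = idx v ∧ idx v = idx w) ∧ ¬ (idx u ≠ idx v ∧ idx v ≠ idx w)) ∧
    (∀ (x : (Sᶜ : Set V)) (p : (G.induce (Sᶜ : Set V)).Walk x x),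
      p.IsCycle → Even p.length) :=
  alternating_cycles_of_trianglePartition_general G n idx hT S hS hmax
end

section
/- For m ≥ 0, the graph K4(m) obtained from K_4 by subdividing one edge m times has a dynamic 3-coloring if and only if m ≡ 2 (mod 3). In particular, if m ≡ 0 or 1 (mod 3), then χ_d(K4(m)) > 3. -/
open SimpleGraph

/-- `K4sub m`: the graph obtained from `K_4` on `{a, b, c, d}` by subdividing the edge
`ab` `m` times. Vertices: `Sum.inl i` for `i : Fin (m+2)` is the path
`a = p_0, w_1, …, w_m, b = p_{m+1}`, and `Sum.inr 0 = c`, `Sum.inr 1 = d`. -/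
def K4sub (m : ℕ) : SimpleGraph (Fin (m + 2) ⊕ Fin 2) :=
  SimpleGraph.fromRel (fun x y =>
    match x, y with
    | Sum.inl i, Sum.inl j => (i : ℕ) + 1 = (j : ℕ)
    | Sum.inl i, Sum.inr _ => (i : ℕ) = 0 ∨ (i : ℕ) = m + 1
    | Sum.inr _, Sum.inl _ => False
    | Sum.inr _, Sum.inr _ => True)

/-!
In a dynamic 3-coloring every inner vertex of the subdivided path `a = p₀, …, p_{m+1} = b`
has degree two, so its two neighbours get different colors; with properness, any three
consecutive path vertices get three different colors, and the coloring of the path is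
3-periodic. Both `a` and `b` are adjacent to the adjacent vertices `c` and `d`, so they get the
same (third) color, which forces `m + 1 ≡ 0 (mod 3)`. Conversely, coloring `pᵢ` by `i mod 3`
and `c`, `d` by `1`, `2` is dynamic when `m ≡ 2 (mod 3)`. Finally, an injective coloring is
dynamic, so the dynamic chromatic number is attained and exceeds `3` when `m ≢ 2 (mod 3)`.
-/

theorem fin_three_eq_of_avoid_pair {x y z w : Fin 3} (hzw : z ≠ w)
    (hxz : x ≠ z) (hxw : x ≠ w) (hyz : y ≠ z) (hyw : y ≠ w) : x = y := by
  revert x y z w; decide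

theorem apply_eq_apply_mod_three {f : ℕ → Fin 3} {n : ℕ}
    (hadj : ∀ i, i + 1 ≤ n → f i ≠ f (i + 1))
    (hskip : ∀ i, i + 2 ≤ n → f i ≠ f (i + 2)) (i : ℕ) (hi : i ≤ n) :
    f i = f (i % 3) := by
  induction i using Nat.strong_induction_on with
  | _ i ih =>
    rcases Nat.lt_or_ge i 3 with hi3 | hi3
    · rw [Nat.mod_eq_of_lt hi3]
    · obtain ⟨j, rfl⟩ := Nat.exists_eq_add_of_le' hi3
      have hshift : f (j + 3) = f j :=
        fin_three_eq_of_avoid_pair (hadj (j + 1) (by omega))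
          (hskip (j + 1) (by omega)).symm (hadj (j + 2) (by omega)).symm
          (hadj j (by omega)) (hskip j (by omega))
      rw [hshift, ih j (by omega) (by omega), Nat.add_mod_right]

section DynamicColoring

variable {V : Type*} {G : SimpleGraph V} {k : ℕ} {c : V → Fin k}

theorem isDynamicColoring_of_injective (hc : c.Injective) : IsDynamicColoring G k c := by
  refine ⟨fun u v huv => hc.ne huv.ne, fun v hv => ?_⟩
  obtain ⟨u, hu, w, hw, huw⟩ := (Set.one_lt_ncard_iff_nontrivial_and_finite.1 hv).1
  exact ⟨u, w, hu, hw, hc.ne huw⟩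

theorem IsDynamicColoring.comp_injective {n : ℕ} (hc : IsDynamicColoring G k c)
    {e : Fin k → Fin n} (he : e.Injective) : IsDynamicColoring G n (e ∘ c) := by
  refine ⟨fun u v huv => he.ne (hc.1 huv), fun v hv => ?_⟩
  obtain ⟨u, w, hu, hw, huw⟩ := hc.2 v hv
  exact ⟨u, w, hu, hw, he.ne huw⟩

theorem IsDynamicColoring.ne_of_neighborSet_eq_pair (hc : IsDynamicColoring G k c)
    {v u w : V} (huw : u ≠ w) (hN : G.neighborSet v = {u, w}) : c u ≠ c w := by
  obtain ⟨x, y, hx, hy, hxy⟩ := hc.2 v (by rw [hN, Set.ncard_pair huw])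
  rw [← mem_neighborSet, hN] at hx hy
  rcases hx with rfl | rfl <;> rcases hy with rfl | rfl
  all_goals first | exact absurd rfl hxy | exact hxy | exact hxy.symm

theorem lt_dynamicChromaticNumber [Finite V] (h : ¬∃ c : V → Fin k, IsDynamicColoring G k c) :
    k < dynamicChromaticNumber G := by
  by_contra! hle
  have hne : {n | ∃ c : V → Fin n, IsDynamicColoring G n c}.Nonempty :=
    ⟨_, _, isDynamicColoring_of_injective (Finite.equivFin V).injective⟩
  obtain ⟨c, hc⟩ := Nat.sInf_mem hne
  exact h ⟨_, hc.comp_injective (Fin.castLE_injective hle)⟩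

end DynamicColoring

namespace K4sub

variable {m : ℕ}

@[simp] theorem adj_inl_inl {i j : Fin (m + 2)} :
    (K4sub m).Adj (.inl i) (.inl j) ↔ (i : ℕ) + 1 = j ∨ (j : ℕ) + 1 = i := by
  rw [K4sub, fromRel_adj]
  simp only [ne_eq, Sum.inl.injEq, Fin.ext_iff]
  omega

@[simp] theorem adj_inl_inr {i : Fin (m + 2)} {t : Fin 2} :
    (K4sub m).Adj (.inl i) (.inr t) ↔ (i : ℕ) = 0 ∨ (i : ℕ) = m + 1 := by
  simp [K4sub]

@[simp] theorem adj_inr_inl {i : Fin (m + 2)} {t : Fin 2} :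
    (K4sub m).Adj (.inr t) (.inl i) ↔ (i : ℕ) = 0 ∨ (i : ℕ) = m + 1 := by
  simp [K4sub]

@[simp] theorem adj_inr_inr {s t : Fin 2} : (K4sub m).Adj (.inr s) (.inr t) ↔ s ≠ t := by
  simp [K4sub]

/-- `p_i` for `i ≤ m + 1`; larger indices wrap around modulo `m + 2`. -/
def path (m i : ℕ) : Fin (m + 2) ⊕ Fin 2 := .inl (Fin.ofNat (m + 2) i)

theorem path_adj_path_succ {i : ℕ} (h : i + 1 ≤ m + 1) :
    (K4sub m).Adj (path m i) (path m (i + 1)) := by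
  simp (disch := omega) [path, Nat.mod_eq_of_lt]

theorem path_adj_inr {i : ℕ} (h : i = 0 ∨ i = m + 1) (t : Fin 2) :
    (K4sub m).Adj (path m i) (.inr t) := by
  simp (disch := omega) [path, Nat.mod_eq_of_lt, h]

theorem neighborSet_path_succ {i : ℕ} (h : i + 2 ≤ m + 1) :
    (K4sub m).neighborSet (path m (i + 1)) = {path m i, path m (i + 2)} := by
  ext (j | t)
  · simp (disch := omega) [path, Fin.ext_iff, Nat.mod_eq_of_lt]
    omega
  · simp (disch := omega) [path, Nat.mod_eq_of_lt]
    omega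

theorem path_ne_path_add_two {i : ℕ} (h : i + 2 ≤ m + 1) : path m i ≠ path m (i + 2) := by
  simp (disch := omega) [path, Fin.ext_iff, Nat.mod_eq_of_lt]

theorem mod_three_eq_two_of_isDynamicColoring {c : Fin (m + 2) ⊕ Fin 2 → Fin 3}
    (hc : IsDynamicColoring (K4sub m) 3 c) : m % 3 = 2 := by
  set f : ℕ → Fin 3 := fun i => c (path m i)
  have hadj : ∀ i, i + 1 ≤ m + 1 → f i ≠ f (i + 1) := fun i hi =>
    hc.1 (path_adj_path_succ hi)
  have hskip : ∀ i, i + 2 ≤ m + 1 → f i ≠ f (i + 2) := fun i hi =>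
    hc.ne_of_neighborSet_eq_pair (path_ne_path_add_two hi) (neighborSet_path_succ hi)
  have hcd : c (.inr 0) ≠ c (.inr 1) := hc.1 (by simp)
  have hends : f 0 = f (m + 1) :=
    fin_three_eq_of_avoid_pair hcd (hc.1 (path_adj_inr (.inl rfl) 0))
      (hc.1 (path_adj_inr (.inl rfl) 1)) (hc.1 (path_adj_inr (.inr rfl) 0))
      (hc.1 (path_adj_inr (.inr rfl) 1))
  have hper := apply_eq_apply_mod_three hadj hskip (m + 1) le_rfl
  rcases (by omega : m % 3 = 0 ∨ m % 3 = 1 ∨ m % 3 = 2) with h | h | h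
  · rw [show (m + 1) % 3 = 1 by omega] at hper
    exact absurd (hends.trans hper) (hadj 0 (by omega))
  · rw [show (m + 1) % 3 = 2 by omega] at hper
    exact absurd (hends.trans hper) (hskip 0 (by omega))
  · exact h

def coloring (m : ℕ) : Fin (m + 2) ⊕ Fin 2 → Fin 3 :=
  Sum.elim (Fin.ofNat 3 ·) Fin.succ

theorem isDynamicColoring_coloring (hm : m % 3 = 2) :
    IsDynamicColoring (K4sub m) 3 (coloring m) := by
  refine ⟨?_, ?_⟩
  · rintro (i | s) (j | t) h <;>
      simp only [adj_inl_inl, adj_inl_inr, adj_inr_inl, adj_inr_inr, coloring, Sum.elim_inl,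
        Sum.elim_inr, ne_eq, Fin.ext_iff, Fin.val_ofNat, Fin.val_succ] at h ⊢ <;>
      omega
  · rintro (i | t) -
    · by_cases hi : (i : ℕ) = 0 ∨ (i : ℕ) = m + 1
      · exact ⟨.inr 0, .inr 1, by simpa using hi, by simpa using hi, by simp [coloring]⟩
      · have := i.isLt
        refine ⟨.inl ⟨i - 1, by omega⟩, .inl ⟨i + 1, by omega⟩, ?_, ?_, ?_⟩ <;>
          simp [coloring, Fin.ext_iff] <;> omega
    · refine ⟨.inl 0, .inr t.rev, by simp, ?_, by simp [coloring, eq_comm]⟩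
      simp only [adj_inr_inr]
      revert t; decide

end K4sub

/-- The graph obtained from `K_4` by subdividing one edge `m` times has a dynamic
3-coloring iff `m ≡ 2 (mod 3)`; in particular, if `m ≡ 0` or `1 (mod 3)` then
`χ_d > 3`. -/
theorem K4sub_dynamic_three_colorable_iff (m : ℕ) :
    ((∃ c : (Fin (m + 2) ⊕ Fin 2) → Fin 3, IsDynamicColoring (K4sub m) 3 c) ↔
      m % 3 = 2) ∧
    ((m % 3 = 0 ∨ m % 3 = 1) → 3 < dynamicChromaticNumber (K4sub m)) := by
  have hiff : (∃ c : (Fin (m + 2) ⊕ Fin 2) → Fin 3, IsDynamicColoring (K4sub m) 3 c) ↔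
      m % 3 = 2 :=
    ⟨fun ⟨_, hc⟩ => K4sub.mod_three_eq_two_of_isDynamicColoring hc,
      fun hm => ⟨_, K4sub.isDynamicColoring_coloring hm⟩⟩
  refine ⟨hiff, fun hm => lt_dynamicChromaticNumber fun hc => ?_⟩
  have := hiff.1 hc
  omega
end

section
/- Let G be a connected claw-free graph with maximum degree Δ(G) = 3, and let v_0, v_1, …, v_k (k ≥ 1) be a pendant path of G, i.e., v_0 has degree 1, each v_i with 1 ≤ i ≤ k−1 has degree 2, and v_k has degree 3 in G. Then G has a dynamic 3-coloring if and only if the subgraph of G induced by V(G) \ {v_0, v_1, …, v_{k−1}} has a dynamic 3-coloring. -/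
open SimpleGraph

/-- `G` is claw-free: no induced subgraph isomorphic to `K_{1,3}`. -/
def ClawFree {V : Type*} (G : SimpleGraph V) : Prop :=
  ¬ ∃ v a b c : V, a ≠ b ∧ a ≠ c ∧ b ≠ c ∧
    G.Adj v a ∧ G.Adj v b ∧ G.Adj v c ∧ ¬ G.Adj a b ∧ ¬ G.Adj a c ∧ ¬ G.Adj b c

/-- `G` contains an `A_i`: a path on `i` vertices whose `i - 2` internal vertices have
degree 2 in `G` and whose two end-vertices have degree 3 in `G`. -/
def HasAPath {V : Type*} (G : SimpleGraph V) (i : ℕ) : Prop :=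
  ∃ v : ℕ → V,
    (∀ a b : ℕ, a < i → b < i → v a = v b → a = b) ∧
    (∀ a : ℕ, a + 1 < i → G.Adj (v a) (v (a + 1))) ∧
    (∀ a : ℕ, 0 < a → a + 1 < i → (G.neighborSet (v a)).ncard = 2) ∧
    (G.neighborSet (v 0)).ncard = 3 ∧
    (G.neighborSet (v (i - 1))).ncard = 3


/-!
Apart from `v k`, no vertex off the path has a neighbour on it, so deleting `v 0, …, v (k - 1)`
only changes the neighbourhood of `v k`, which loses `v (k - 1)`. Claw-freeness makes the two
remaining neighbours of `v k` adjacent, so they keep distinct colours and a dynamic colouring of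
`G` restricts. Conversely, colouring `v i` by `c (v k) + (k - i) mod 3` extends a dynamic
colouring of the smaller graph: path vertices at distance one or two get distinct colours.
-/

open Fin.NatCast

theorem Set.eq_or_eq_of_ncard_eq_two {α : Type*} {s : Set α} {a b x : α} (hs : s.ncard = 2)
    (hab : a ≠ b) (ha : a ∈ s) (hb : b ∈ s) (hx : x ∈ s) : x = a ∨ x = b := by
  have hpair : {a, b} = s :=
    Set.eq_of_subset_of_ncard_le (Set.insert_subset ha (Set.singleton_subset_iff.mpr hb))
      (by rw [hs, Set.ncard_pair hab]) (Set.finite_of_ncard_ne_zero (by omega))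
  simpa [← hpair] using hx

theorem Fin.add_natCast_ne_add_natCast {N : ℕ} [NeZero N] {m n : ℕ} (a : Fin N)
    (h : m % N ≠ n % N) : a + (m : Fin N) ≠ a + (n : Fin N) := by
  intro hmn
  have := congrArg Fin.val (add_left_cancel hmn)
  simp only [Fin.val_natCast] at this
  exact h this

theorem ClawFree.adj_or_adj_or_adj {V : Type*} {G : SimpleGraph V} (hG : ClawFree G)
    {u a b c : V} (ha : G.Adj u a) (hb : G.Adj u b) (hc : G.Adj u c)
    (hab : a ≠ b) (hac : a ≠ c) (hbc : b ≠ c) : G.Adj a b ∨ G.Adj a c ∨ G.Adj b c := by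
  by_contra! h
  exact hG ⟨u, a, b, c, hab, hac, hbc, ha, hb, hc, h.1, h.2.1, h.2.2⟩

namespace SimpleGraph

variable {V : Type*} {G : SimpleGraph V}

theorem ncard_neighborSet_induce (s : Set V) (u : s) :
    ((G.induce s).neighborSet u).ncard = (G.neighborSet u ∩ s).ncard := by
  rw [neighborSet_induce, ← Set.ncard_image_of_injective _ Subtype.val_injective,
    Subtype.image_preimage_coe, Set.inter_comm]

end SimpleGraph

section DynamicColoring

variable {V : Type*} {G : SimpleGraph V} {n : ℕ}

theorem IsDynamicColoring.induce {c : V → Fin n} (hc : IsDynamicColoring G n c) {s : Set V}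
    (hs : ∀ u ∈ s, G.neighborSet u ⊆ s ∨
      ∃ a ∈ s, ∃ b ∈ s, G.Adj u a ∧ G.Adj u b ∧ G.Adj a b) :
    IsDynamicColoring (G.induce s) n (fun u ↦ c u) := by
  refine ⟨fun u w huw ↦ hc.1 huw, fun u hu ↦ ?_⟩
  rcases hs u u.2 with hsub | ⟨a, ha, b, hb, hua, hub, hab⟩
  · rw [ncard_neighborSet_induce, Set.inter_eq_left.mpr hsub] at hu
    obtain ⟨a, b, hua, hub, hab⟩ := hc.2 u hu
    exact ⟨⟨a, hsub hua⟩, ⟨b, hsub hub⟩, hua, hub, hab⟩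
  · exact ⟨⟨a, ha⟩, ⟨b, hb⟩, hua, hub, hc.1 hab⟩

theorem IsDynamicColoring.of_induce {s : Set V} {c : s → Fin n}
    (hc : IsDynamicColoring (G.induce s) n c) {c' : V → Fin n} (hcc' : ∀ u : s, c' u = c u)
    (hproper : ∀ u w, u ∉ s → G.Adj u w → c' u ≠ c' w)
    (hdyn : ∀ u ∉ s, 2 ≤ (G.neighborSet u).ncard →
      ∃ a b, G.Adj u a ∧ G.Adj u b ∧ c' a ≠ c' b)
    (hdeg : ∀ u : s, 2 ≤ (G.neighborSet u).ncard → 2 ≤ ((G.induce s).neighborSet u).ncard) :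
    IsDynamicColoring G n c' := by
  refine ⟨fun u w huw ↦ ?_, fun u hu ↦ ?_⟩
  · by_cases hu : u ∈ s
    · by_cases hw : w ∈ s
      · rw [hcc' ⟨u, hu⟩, hcc' ⟨w, hw⟩]
        exact hc.1 (show (G.induce s).Adj ⟨u, hu⟩ ⟨w, hw⟩ from huw)
      · exact (hproper w u hw huw.symm).symm
    · exact hproper u w hu huw
  · by_cases hus : u ∈ s
    · obtain ⟨a, b, hua, hub, hab⟩ := hc.2 ⟨u, hus⟩ (hdeg ⟨u, hus⟩ hu)
      exact ⟨a, b, hua, hub, by rwa [hcc', hcc']⟩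
    · exact hdyn u hus hu

end DynamicColoring

section PendantPath

variable {V : Type*}

structure IsPendantPath (G : SimpleGraph V) (k : ℕ) (v : ℕ → V) : Prop where
  one_le : 1 ≤ k
  injOn : Set.InjOn v (Set.Iic k)
  adj : ∀ i < k, G.Adj (v i) (v (i + 1))
  ncard_start : (G.neighborSet (v 0)).ncard = 1
  ncard_interior : ∀ i, 0 < i → i < k → (G.neighborSet (v i)).ncard = 2
  ncard_end : (G.neighborSet (v k)).ncard = 3

def pathComplement (k : ℕ) (v : ℕ → V) : Set V := {u | ∀ i, i < k → u ≠ v i}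

variable {G : SimpleGraph V} {k : ℕ} {v : ℕ → V}

theorem notMem_pathComplement {u : V} :
    u ∉ pathComplement k v ↔ ∃ i < k, u = v i := by
  simp [pathComplement]

namespace IsPendantPath

theorem adj_pred (hp : IsPendantPath G k v) {i : ℕ} (hi0 : 0 < i) (hik : i ≤ k) :
    G.Adj (v i) (v (i - 1)) := by
  have h := hp.adj (i - 1) (by omega)
  rwa [Nat.sub_add_cancel hi0, adj_comm] at h

theorem eq_succ_or_eq_pred_of_adj (hp : IsPendantPath G k v) {i : ℕ} (hik : i < k) {w : V}
    (hw : G.Adj (v i) w) : w = v (i + 1) ∨ 0 < i ∧ w = v (i - 1) := by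
  rcases Nat.eq_zero_or_pos i with rfl | hi0
  · obtain ⟨a, ha⟩ := Set.ncard_eq_one.mp hp.ncard_start
    have h1 : v 1 ∈ G.neighborSet (v 0) := hp.adj 0 hp.one_le
    have hw' : w ∈ G.neighborSet (v 0) := hw
    rw [ha, Set.mem_singleton_iff] at h1 hw'
    exact Or.inl (hw'.trans h1.symm)
  · have hne : v (i + 1) ≠ v (i - 1) := fun h ↦ by
      have := hp.injOn (Set.mem_Iic.mpr (by omega)) (Set.mem_Iic.mpr (by omega)) h
      omega
    exact (Set.eq_or_eq_of_ncard_eq_two (hp.ncard_interior i hi0 hik) hne (hp.adj i hik)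
      (hp.adj_pred hi0 hik.le) hw).imp_right (⟨hi0, ·⟩)

theorem end_mem_pathComplement (hp : IsPendantPath G k v) : v k ∈ pathComplement k v :=
  fun i hi h ↦ by
    have := hp.injOn (Set.mem_Iic.mpr le_rfl) (Set.mem_Iic.mpr hi.le) h
    omega

theorem eq_end_of_adj_mem_pathComplement (hp : IsPendantPath G k v) {i : ℕ} (hik : i < k)
    {w : V} (hw : G.Adj (v i) w) (hwC : w ∈ pathComplement k v) : w = v k ∧ i + 1 = k := by
  rcases hp.eq_succ_or_eq_pred_of_adj hik hw with rfl | ⟨hi0, rfl⟩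
  · have hik' : i + 1 = k := by
      by_contra h
      exact hwC (i + 1) (by omega) rfl
    exact ⟨by rw [hik'], hik'⟩
  · exact absurd rfl (hwC (i - 1) (by omega))

theorem neighborSet_subset_pathComplement (hp : IsPendantPath G k v) {u : V}
    (hu : u ∈ pathComplement k v) (huk : u ≠ v k) : G.neighborSet u ⊆ pathComplement k v :=
  fun _ hw _ hi hwi ↦ huk (hp.eq_end_of_adj_mem_pathComplement hi (hwi ▸ hw.symm) hu).1

theorem mem_pathComplement_of_adj_end (hp : IsPendantPath G k v) {x : V} (hx : G.Adj (v k) x)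
    (hxk : x ≠ v (k - 1)) : x ∈ pathComplement k v := by
  rintro i hi rfl
  have := (hp.eq_end_of_adj_mem_pathComplement hi hx.symm hp.end_mem_pathComplement).2
  exact hxk (by rw [show i = k - 1 by omega])

theorem exists_adj_end_mem_pathComplement (hp : IsPendantPath G k v) :
    ∃ x ∈ pathComplement k v, ∃ y ∈ pathComplement k v,
      x ≠ y ∧ G.Adj (v k) x ∧ G.Adj (v k) y := by
  have hpred : v (k - 1) ∈ G.neighborSet (v k) := hp.adj_pred hp.one_le le_rfl
  obtain ⟨x, y, hxy, hset⟩ := Set.ncard_eq_two.mp <| by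
    rw [Set.ncard_sdiff_singleton_of_mem hpred, hp.ncard_end]
  have hx : x ∈ G.neighborSet (v k) \ {v (k - 1)} := by simp [hset]
  have hy : y ∈ G.neighborSet (v k) \ {v (k - 1)} := by simp [hset]
  exact ⟨x, hp.mem_pathComplement_of_adj_end hx.1 hx.2, y,
    hp.mem_pathComplement_of_adj_end hy.1 hy.2, hxy, hx.1, hy.1⟩

/-- Together with `v (k - 1)`, two non-adjacent remaining neighbours of `v k` would form a claw. -/
theorem exists_triangle_end (hp : IsPendantPath G k v) (hclaw : ClawFree G) :
    ∃ x ∈ pathComplement k v, ∃ y ∈ pathComplement k v,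
      G.Adj (v k) x ∧ G.Adj (v k) y ∧ G.Adj x y := by
  obtain ⟨x, hxC, y, hyC, hxy, hx, hy⟩ := hp.exists_adj_end_mem_pathComplement
  have hpred := hp.adj_pred hp.one_le le_rfl
  have hk : k - 1 < k := by have := hp.one_le; omega
  have not_adj_pred : ∀ z ∈ pathComplement k v, G.Adj (v k) z → ¬ G.Adj z (v (k - 1)) :=
    fun z hzC hz h ↦ hz.ne (hp.eq_end_of_adj_mem_pathComplement hk h.symm hzC).1.symm
  have hne : ∀ z ∈ pathComplement k v, z ≠ v (k - 1) := fun z hzC ↦ hzC (k - 1) hk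
  refine ⟨x, hxC, y, hyC, hx, hy, ?_⟩
  rcases hclaw.adj_or_adj_or_adj hx hy hpred hxy (hne x hxC) (hne y hyC) with h | h | h
  · exact h
  · exact absurd h (not_adj_pred x hxC hx)
  · exact absurd h (not_adj_pred y hyC hy)

end IsPendantPath

open Classical in
/-- Off `pathComplement k v`, the vertex `v i` is recovered from `u = v i` by `invFunOn`
and coloured `a + (k - i) mod 3`. -/
noncomputable def extendAlongPath (k : ℕ) (v : ℕ → V) (c : pathComplement k v → Fin 3)
    (a : Fin 3) : V → Fin 3 := fun u ↦
  if h : u ∈ pathComplement k v then c ⟨u, h⟩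
  else a + ((k - Function.invFunOn v (Set.Iic k) u : ℕ) : Fin 3)

theorem extendAlongPath_apply_of_mem (c : pathComplement k v → Fin 3) (a : Fin 3)
    (u : pathComplement k v) : extendAlongPath k v c a u = c u := by
  simp [extendAlongPath]

namespace IsPendantPath

theorem extendAlongPath_apply (hp : IsPendantPath G k v)
    (c : pathComplement k v → Fin 3) {i : ℕ} (hik : i ≤ k) :
    extendAlongPath k v c (c ⟨v k, hp.end_mem_pathComplement⟩) (v i) =
      c ⟨v k, hp.end_mem_pathComplement⟩ + ((k - i : ℕ) : Fin 3) := by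
  rcases hik.lt_or_eq with hik | rfl
  · have hnot : v i ∉ pathComplement k v := notMem_pathComplement.mpr ⟨i, hik, rfl⟩
    rw [extendAlongPath, dif_neg hnot, hp.injOn.leftInvOn_invFunOn (Set.mem_Iic.mpr hik.le)]
  · rw [extendAlongPath_apply_of_mem c _ ⟨v i, hp.end_mem_pathComplement⟩, Nat.sub_self,
      Nat.cast_zero, add_zero]

theorem two_le_ncard_neighborSet_induce (hp : IsPendantPath G k v)
    (u : pathComplement k v) (hu : 2 ≤ (G.neighborSet u).ncard) :
    2 ≤ ((G.induce (pathComplement k v)).neighborSet u).ncard := by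
  rw [ncard_neighborSet_induce]
  by_cases huk : (u : V) = v k
  · obtain ⟨x, hxC, y, hyC, hxy, hx, hy⟩ := hp.exists_adj_end_mem_pathComplement
    have hfin : (G.neighborSet u).Finite := Set.finite_of_ncard_ne_zero (by omega)
    rw [← Set.ncard_pair hxy]
    exact Set.ncard_le_ncard (Set.insert_subset ⟨huk ▸ hx, hxC⟩
      (Set.singleton_subset_iff.mpr ⟨huk ▸ hy, hyC⟩)) (hfin.inter_of_left _)
  · rwa [Set.inter_eq_left.mpr (hp.neighborSet_subset_pathComplement u.2 huk)]

theorem isDynamicColoring_extendAlongPath (hp : IsPendantPath G k v)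
    {c : pathComplement k v → Fin 3}
    (hc : IsDynamicColoring (G.induce (pathComplement k v)) 3 c) :
    IsDynamicColoring G 3 (extendAlongPath k v c (c ⟨v k, hp.end_mem_pathComplement⟩)) := by
  set a := c ⟨v k, hp.end_mem_pathComplement⟩
  refine hc.of_induce (extendAlongPath_apply_of_mem c a) (fun u w hu huw ↦ ?_)
    (fun u hu h2 ↦ ?_) hp.two_le_ncard_neighborSet_induce
  · obtain ⟨i, hik, rfl⟩ := notMem_pathComplement.mp hu
    rcases hp.eq_succ_or_eq_pred_of_adj hik huw with rfl | ⟨hi0, rfl⟩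
    · rw [hp.extendAlongPath_apply c hik.le, hp.extendAlongPath_apply c hik]
      exact Fin.add_natCast_ne_add_natCast a (by omega)
    · rw [hp.extendAlongPath_apply c hik.le, hp.extendAlongPath_apply c (by omega)]
      exact Fin.add_natCast_ne_add_natCast a (by omega)
  · obtain ⟨i, hik, rfl⟩ := notMem_pathComplement.mp hu
    have hi0 : 0 < i := Nat.pos_of_ne_zero fun h ↦ by
      subst h
      rw [hp.ncard_start] at h2
      omega
    refine ⟨v (i - 1), v (i + 1), hp.adj_pred hi0 hik.le, hp.adj i hik, ?_⟩
    rw [hp.extendAlongPath_apply c (by omega), hp.extendAlongPath_apply c hik]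
    exact Fin.add_natCast_ne_add_natCast a (by omega)

theorem isDynamicColoring_induce (hp : IsPendantPath G k v) (hclaw : ClawFree G)
    {n : ℕ} {c : V → Fin n} (hc : IsDynamicColoring G n c) :
    IsDynamicColoring (G.induce (pathComplement k v)) n (fun u ↦ c u) := by
  refine hc.induce fun u hu ↦ ?_
  by_cases huk : u = v k
  · subst huk
    exact Or.inr (hp.exists_triangle_end hclaw)
  · exact Or.inl (hp.neighborSet_subset_pathComplement hu huk)

end IsPendantPath

end PendantPath

theorem dynamic_three_colorable_iff_delete_pendant_path_general {V : Type*}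
    (G : SimpleGraph V) (hclaw : ClawFree G)
    (k : ℕ) (hk : 1 ≤ k) (v : ℕ → V)
    (hinj : ∀ i j : ℕ, i ≤ k → j ≤ k → v i = v j → i = j)
    (hadj : ∀ i : ℕ, i < k → G.Adj (v i) (v (i + 1)))
    (h0 : (G.neighborSet (v 0)).ncard = 1)
    (hmid : ∀ i : ℕ, 0 < i → i < k → (G.neighborSet (v i)).ncard = 2)
    (hend : (G.neighborSet (v k)).ncard = 3) :
    (∃ c : V → Fin 3, IsDynamicColoring G 3 c) ↔
      (∃ c : {u : V | ∀ i : ℕ, i < k → u ≠ v i} → Fin 3,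
        IsDynamicColoring (G.induce {u : V | ∀ i : ℕ, i < k → u ≠ v i}) 3 c) := by
  have hp : IsPendantPath G k v :=
    ⟨hk, fun i hi j hj ↦ hinj i j hi hj, hadj, h0, hmid, hend⟩
  exact ⟨fun ⟨c, hc⟩ ↦ ⟨_, hp.isDynamicColoring_induce hclaw hc⟩,
    fun ⟨c, hc⟩ ↦ ⟨_, hp.isDynamicColoring_extendAlongPath hc⟩⟩

/-- Let `G` be a connected claw-free graph with `Δ(G) = 3` and let
`v_0, v_1, …, v_k` be a pendant path  (`deg v_0 = 1`, internal vertices of degree 2,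
`deg v_k = 3`). Then `G` has a dynamic 3-coloring iff the subgraph induced by
`V(G) \ {v_0, …, v_{k-1}}` has a dynamic 3-coloring. -/
theorem dynamic_three_colorable_iff_delete_pendant_path {V : Type*} [Fintype V]
    (G : SimpleGraph V) (hconn : G.Connected) (hclaw : ClawFree G)
    (hmax : ∀ u : V, (G.neighborSet u).ncard ≤ 3)
    (hmax' : ∃ u : V, (G.neighborSet u).ncard = 3)
    (k : ℕ) (hk : 1 ≤ k) (v : ℕ → V)
    (hinj : ∀ i j : ℕ, i ≤ k → j ≤ k → v i = v j → i = j)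
    (hadj : ∀ i : ℕ, i < k → G.Adj (v i) (v (i + 1)))
    (h0 : (G.neighborSet (v 0)).ncard = 1)
    (hmid : ∀ i : ℕ, 0 < i → i < k → (G.neighborSet (v i)).ncard = 2)
    (hend : (G.neighborSet (v k)).ncard = 3) :
    (∃ c : V → Fin 3, IsDynamicColoring G 3 c) ↔
      (∃ c : {u : V | ∀ i : ℕ, i < k → u ≠ v i} → Fin 3,
        IsDynamicColoring (G.induce {u : V | ∀ i : ℕ, i < k → u ≠ v i}) 3 c) :=
  dynamic_three_colorable_iff_delete_pendant_path_general G hclaw k hk v hinj hadj h0 hmid hend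
end
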